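/- arXiv:1404.6192 — 4 statements merged into one kernel-verified Lean document; each statement's English description precedes it below -/
import Mathlib

section
/- Let Λ = {λ_n} be an increasing sequence of positive numbers with λ_n → ∞. If limsup_{n→∞} (λ_n · log n)/n < ∞, then Λ#BV ⊆ HBV, i.e. every 2π-periodic (in each variable) function f : ℝ² → ℝ with Λ#V₁(f) + Λ#V₂(f) < ∞ has bounded harmonic variation. -/
open scoped ENNReal BigOperators
open Filter Set

noncomputable section

/-- A collection of `n` pairwise nonoverlapping subintervals of `T = [0, 2π]`,
given as pairs of endpoints. -/
def NonoverlapIcc (n : ℕ) (I : Fin n → ℝ × ℝ) : Prop :=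
  (∀ i, 0 ≤ (I i).1 ∧ (I i).1 < (I i).2 ∧ (I i).2 ≤ 2 * Real.pi) ∧
    ∀ i j, i ≠ j → (I i).2 ≤ (I j).1 ∨ (I j).2 ≤ (I i).1

/-- `f : ℝ² → ℝ` (curried) is `2π`-periodic in each variable. -/
def Periodic2 (f : ℝ → ℝ → ℝ) : Prop :=
  ∀ x y : ℝ, f (x + 2 * Real.pi) y = f x y ∧ f x (y + 2 * Real.pi) = f x y

/-- `ΛV₁(f)`: partial `Λ`-variation in the first variable. -/
def LamV1 (Λ : ℕ → ℝ) (f : ℝ → ℝ → ℝ) : ℝ≥0∞ :=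
  ⨆ (y ∈ Icc (0:ℝ) (2 * Real.pi)) (n : ℕ) (I : Fin n → ℝ × ℝ) (_ : NonoverlapIcc n I),
    ENNReal.ofReal (∑ i, |f (I i).2 y - f (I i).1 y| / Λ ((i : ℕ) + 1))

/-- `ΛV₂(f)`: partial `Λ`-variation in the second variable. -/
def LamV2 (Λ : ℕ → ℝ) (f : ℝ → ℝ → ℝ) : ℝ≥0∞ :=
  ⨆ (x ∈ Icc (0:ℝ) (2 * Real.pi)) (m : ℕ) (J : Fin m → ℝ × ℝ) (_ : NonoverlapIcc m J),
    ENNReal.ofReal (∑ j, |f x (J j).2 - f x (J j).1| / Λ ((j : ℕ) + 1))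

/-- `ΛV₁,₂(f)`: mixed `Λ`-variation. -/
def LamV12 (Λ : ℕ → ℝ) (f : ℝ → ℝ → ℝ) : ℝ≥0∞ :=
  ⨆ (n : ℕ) (m : ℕ) (I : Fin n → ℝ × ℝ) (J : Fin m → ℝ × ℝ)
    (_ : NonoverlapIcc n I) (_ : NonoverlapIcc m J),
    ENNReal.ofReal (∑ i, ∑ j,
      |f (I i).1 (J j).1 - f (I i).1 (J j).2 - f (I i).2 (J j).1 + f (I i).2 (J j).2| /
        (Λ ((i : ℕ) + 1) * Λ ((j : ℕ) + 1)))

/-- Total harmonic variation `HV(f) = HV₁(f) + HV₂(f) + HV₁,₂(f)` (with `λ_n = n`).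
`f ∈ HBV` iff `HarmonicV f ≠ ⊤`. -/
def HarmonicV (f : ℝ → ℝ → ℝ) : ℝ≥0∞ :=
  LamV1 (fun n => (n : ℝ)) f + LamV2 (fun n => (n : ℝ)) f + LamV12 (fun n => (n : ℝ)) f

/-- `Λ#V₁(f)`. -/
def LamSharpV1 (Λ : ℕ → ℝ) (f : ℝ → ℝ → ℝ) : ℝ≥0∞ :=
  ⨆ (n : ℕ) (I : Fin n → ℝ × ℝ) (y : Fin n → ℝ)
    (_ : NonoverlapIcc n I) (_ : ∀ i, y i ∈ Icc (0:ℝ) (2 * Real.pi)),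
    ENNReal.ofReal (∑ i, |f (I i).2 (y i) - f (I i).1 (y i)| / Λ ((i : ℕ) + 1))

/-- `Λ#V₂(f)`. -/
def LamSharpV2 (Λ : ℕ → ℝ) (f : ℝ → ℝ → ℝ) : ℝ≥0∞ :=
  ⨆ (m : ℕ) (J : Fin m → ℝ × ℝ) (x : Fin m → ℝ)
    (_ : NonoverlapIcc m J) (_ : ∀ j, x j ∈ Icc (0:ℝ) (2 * Real.pi)),
    ENNReal.ofReal (∑ j, |f (x j) (J j).2 - f (x j) (J j).1| / Λ ((j : ℕ) + 1))

/-- A collection of `n` pairwise nonoverlapping rectangles `[α,β] × [γ,δ] ⊆ T²`,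
encoded as `((α, β), (γ, δ))`. -/
def NonoverlapRect (n : ℕ) (A : Fin n → (ℝ × ℝ) × (ℝ × ℝ)) : Prop :=
  (∀ k, 0 ≤ (A k).1.1 ∧ (A k).1.1 < (A k).1.2 ∧ (A k).1.2 ≤ 2 * Real.pi ∧
        0 ≤ (A k).2.1 ∧ (A k).2.1 < (A k).2.2 ∧ (A k).2.2 ≤ 2 * Real.pi) ∧
    ∀ k l, k ≠ l →
      Disjoint (Ioo (A k).1.1 (A k).1.2 ×ˢ Ioo (A k).2.1 (A k).2.2)
        (Ioo (A l).1.1 (A l).1.2 ×ˢ Ioo (A l).2.1 (A l).2.2)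

/-- `Λ*V(f)` of Dyachenko–Waterman. -/
def LamStarV (Λ : ℕ → ℝ) (f : ℝ → ℝ → ℝ) : ℝ≥0∞ :=
  ⨆ (n : ℕ) (A : Fin n → (ℝ × ℝ) × (ℝ × ℝ)) (_ : NonoverlapRect n A),
    ENNReal.ofReal (∑ k,
      |f (A k).1.1 (A k).2.1 - f (A k).1.1 (A k).2.2 -
        f (A k).1.2 (A k).2.1 + f (A k).1.2 (A k).2.2| / Λ ((k : ℕ) + 1))

/-- Partial `p`-variation (first variable); with `Φ(u) = u^p`. -/
def PV1pow (p : ℝ) (f : ℝ → ℝ → ℝ) : ℝ≥0∞ :=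
  ⨆ (y ∈ Icc (0:ℝ) (2 * Real.pi)) (n : ℕ) (I : Fin n → ℝ × ℝ) (_ : NonoverlapIcc n I),
    ENNReal.ofReal (∑ i, |f (I i).2 y - f (I i).1 y| ^ p)

/-- Partial `p`-variation (second variable). -/
def PV2pow (p : ℝ) (f : ℝ → ℝ → ℝ) : ℝ≥0∞ :=
  ⨆ (x ∈ Icc (0:ℝ) (2 * Real.pi)) (m : ℕ) (J : Fin m → ℝ × ℝ) (_ : NonoverlapIcc m J),
    ENNReal.ofReal (∑ j, |f x (J j).2 - f x (J j).1| ^ p)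

/-- `V#_{Φ,1}(f)` for the class `B#V_Φ`. -/
def PhiSharpV1 (Φ : ℝ → ℝ) (f : ℝ → ℝ → ℝ) : ℝ≥0∞ :=
  ⨆ (n : ℕ) (I : Fin n → ℝ × ℝ) (y : Fin n → ℝ)
    (_ : NonoverlapIcc n I) (_ : ∀ i, y i ∈ Icc (0:ℝ) (2 * Real.pi)),
    ENNReal.ofReal (∑ i, Φ |f (I i).2 (y i) - f (I i).1 (y i)|)

/-- `V#_{Φ,2}(f)` for the class `B#V_Φ`. -/
def PhiSharpV2 (Φ : ℝ → ℝ) (f : ℝ → ℝ → ℝ) : ℝ≥0∞ :=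
  ⨆ (m : ℕ) (J : Fin m → ℝ × ℝ) (x : Fin m → ℝ)
    (_ : NonoverlapIcc m J) (_ : ∀ j, x j ∈ Icc (0:ℝ) (2 * Real.pi)),
    ENNReal.ofReal (∑ j, Φ |f (x j) (J j).2 - f (x j) (J j).1|)

/-- Partial modulus of variation `v₁(n, f)`. -/
def modV1 (f : ℝ → ℝ → ℝ) (n : ℕ) : ℝ≥0∞ :=
  ⨆ (y ∈ Icc (0:ℝ) (2 * Real.pi)) (I : Fin n → ℝ × ℝ) (_ : NonoverlapIcc n I),
    ENNReal.ofReal (∑ i, |f (I i).2 y - f (I i).1 y|)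

/-- Partial modulus of variation `v₂(m, f)`. -/
def modV2 (f : ℝ → ℝ → ℝ) (m : ℕ) : ℝ≥0∞ :=
  ⨆ (x ∈ Icc (0:ℝ) (2 * Real.pi)) (J : Fin m → ℝ × ℝ) (_ : NonoverlapIcc m J),
    ENNReal.ofReal (∑ j, |f x (J j).2 - f x (J j).1|)

/-- `v₁#(n, f)`. -/
def modSharpV1 (f : ℝ → ℝ → ℝ) (n : ℕ) : ℝ≥0∞ :=
  ⨆ (I : Fin n → ℝ × ℝ) (y : Fin n → ℝ)
    (_ : NonoverlapIcc n I) (_ : ∀ i, y i ∈ Icc (0:ℝ) (2 * Real.pi)),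
    ENNReal.ofReal (∑ i, |f (I i).2 (y i) - f (I i).1 (y i)|)

/-- `v₂#(m, f)`. -/
def modSharpV2 (f : ℝ → ℝ → ℝ) (m : ℕ) : ℝ≥0∞ :=
  ⨆ (J : Fin m → ℝ × ℝ) (x : Fin m → ℝ)
    (_ : NonoverlapIcc m J) (_ : ∀ j, x j ∈ Icc (0:ℝ) (2 * Real.pi)),
    ENNReal.ofReal (∑ j, |f (x j) (J j).2 - f (x j) (J j).1|)

/-- The shifted sequence `Λ_n = {λ_k}_{k=n}^∞`: its `i`-th member (`i ≥ 1`) is `λ_{n+i-1}`. -/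
def ShiftSeq (Λ : ℕ → ℝ) (n : ℕ) : ℕ → ℝ := fun k => Λ (k + n - 1)

/-- The sequence `λ_n = n / log n` (for `n ≥ 2`; the value at `n ≤ 1` is irrelevant). -/
def nlogSeq : ℕ → ℝ := fun n => if n ≤ 1 then 1 else (n : ℝ) / Real.log n

/-- Double Fourier coefficient
`f̂(m,n) = (1/(4π²)) ∫₀^{2π}∫₀^{2π} f(x,y) e^{-imx} e^{-iny} dx dy`. -/
def fCoef (f : ℝ → ℝ → ℝ) (m n : ℤ) : ℂ :=
  (4 * (Real.pi : ℂ) ^ 2)⁻¹ *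
    ∫ x in (0:ℝ)..(2 * Real.pi), ∫ y in (0:ℝ)..(2 * Real.pi),
      (f x y : ℂ) * Complex.exp (-(Complex.I * (m : ℂ) * (x : ℂ))) *
        Complex.exp (-(Complex.I * (n : ℂ) * (y : ℂ)))

/-- Rectangular partial sum `S_{M,N}[f,(x,y)]` of the double Fourier series. -/
def SRect (f : ℝ → ℝ → ℝ) (M N : ℕ) (x y : ℝ) : ℂ :=
  ∑ m ∈ Finset.Icc (-(M : ℤ)) (M : ℤ), ∑ n ∈ Finset.Icc (-(N : ℤ)) (N : ℤ),
    fCoef f m n * Complex.exp (Complex.I * (m : ℂ) * (x : ℂ)) *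
      Complex.exp (Complex.I * (n : ℂ) * (y : ℂ))

/-- One-sided punctured neighborhood filter: from the right if `s = true`,
from the left if `s = false`. -/
def sideF (x : ℝ) (s : Bool) : Filter ℝ :=
  if s then nhdsWithin x (Ioi x) else nhdsWithin x (Iio x)

/-- `HasQuadLim f x y s t L` means the open-quadrant limit of `f` at `(x,y)` from the
quadrant with horizontal direction `s` and vertical direction `t` exists and equals `L`
(e.g. `s = true, t = false` is `f(x+0, y-0)`). -/
def HasQuadLim (f : ℝ → ℝ → ℝ) (x y : ℝ) (s t : Bool) (L : ℝ) : Prop :=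
  Tendsto (fun p : ℝ × ℝ => f p.1 p.2) ((sideF x s) ×ˢ (sideF y t)) (nhds L)

/-- Cesàro numbers `A_k^α = (α+1)(α+2)⋯(α+k)/k!`. -/
def AA (α : ℝ) : ℕ → ℝ
  | 0 => 1
  | k + 1 => AA α k * (α + ((k : ℝ) + 1)) / ((k : ℝ) + 1)

/-- Cesàro `(C; α, β)` means of the double Fourier series of `f`. -/
def cesaro (f : ℝ → ℝ → ℝ) (α β : ℝ) (n m : ℕ) (x y : ℝ) : ℂ :=
  ((1 / (AA α n * AA β m) : ℝ) : ℂ) *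
    ∑ i ∈ Finset.range (n + 1), ∑ j ∈ Finset.range (m + 1),
      ((AA (α - 1) (n - i) * AA (β - 1) (m - j) : ℝ) : ℂ) * SRect f i j x y

end

/-!
The growth condition says `λ_n H_n = O(n)`, `H_n` the harmonic numbers. Hence `1/n ≤ K/λ_n`,
which bounds `HV₁` and `HV₂` by `Λ#V₁` and `Λ#V₂`, and
`H_r² ≤ 2 ∑_{k ≤ r} H_k/k ≤ 2K ∑_{k ≤ r} 1/λ_k`.

For the mixed variation, `|f(I_i, J_j)| ≤ min(u_i, v_j)`, where `u_i` (`v_j`) is the largest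
increment in row `i` (column `j`). As `|f(I, [c, d])| ≤ |f(I, d)| + |f(I, c)|`, every
rearrangement of `u` satisfies `∑ u_{σ k}/λ_k ≤ 2 Λ#V₁(f)`, and likewise for `v`. With `u` and `v`
sorted decreasingly, `∑_{i,j} min(u_i, v_j)/(i j) ≤ K (∑ u_k/λ_k + ∑ v_k/λ_k)` by induction:
subtracting the smallest value `c` of both sequences splits off `c H_n H_p ≤ c (H_n² + H_p²)/2`.
-/

open Finset

theorem exists_perm_antitone {α : Type*} [LinearOrder α] {n : ℕ} (u : Fin n → α) :
    ∃ σ : Equiv.Perm (Fin n), Antitone (u ∘ σ) :=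
  ⟨Tuple.sort (OrderDual.toDual ∘ u), monotone_toDual_comp_iff.1 (Tuple.monotone_sort _)⟩

theorem sum_mul_le_sum_comp_perm_mul {n : ℕ} {w : ℕ → ℝ} (hw : Antitone w) {g : Fin n → ℝ}
    {σ : Equiv.Perm (Fin n)} (hσ : Antitone (g ∘ σ)) :
    ∑ i, g i * w i ≤ ∑ i, g (σ i) * w i := by
  have := (hσ.monovary (hw.comp_monotone Fin.val_strictMono.monotone)).sum_comp_perm_mul_le_sum_mul
    (σ := σ⁻¹)
  simpa using this

section MinSum

variable {w μ : ℕ → ℝ} {K : ℝ}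

theorem sum_mul_sum_le_of_sq_le (hwμ : ∀ r, (∑ k ∈ range r, w k) ^ 2 ≤ K * ∑ k ∈ range r, μ k)
    (r s : ℕ) :
    (∑ i : Fin r, w i) * (∑ j : Fin s, w j) ≤
      K / 2 * (∑ i : Fin r, μ i + ∑ j : Fin s, μ j) := by
  simp only [Fin.sum_univ_eq_sum_range]
  nlinarith [hwμ r, hwμ s, sq_nonneg (∑ k ∈ range r, w k - ∑ k ∈ range s, w k)]

theorem sum_sum_min_mul_comm {n p : ℕ} (u : Fin n → ℝ) (v : Fin p → ℝ) :
    ∑ i, ∑ j, min (u i) (v j) * (w i * w j) = ∑ j, ∑ i, min (v j) (u i) * (w j * w i) := by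
  rw [sum_comm]
  exact sum_congr rfl fun j _ => sum_congr rfl fun i _ => by rw [min_comm, mul_comm (w i)]

theorem sum_sum_min_mul_le_of_peel
    (hwμ : ∀ r, (∑ k ∈ range r, w k) ^ 2 ≤ K * ∑ k ∈ range r, μ k)
    {n p : ℕ} {u : Fin (n + 1) → ℝ} {v : Fin (p + 1) → ℝ} (hv : Antitone v)
    (hc : 0 ≤ u (Fin.last n)) (hlast : u (Fin.last n) ≤ v (Fin.last p))
    (ih : ∑ i : Fin n, ∑ j, min (u i.castSucc - u (Fin.last n)) (v j - u (Fin.last n)) * (w i * w j)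
      ≤ K / 2 * (∑ i : Fin n, (u i.castSucc - u (Fin.last n)) * μ i +
        ∑ j, (v j - u (Fin.last n)) * μ j)) :
    ∑ i, ∑ j, min (u i) (v j) * (w i * w j) ≤ K / 2 * (∑ i, u i * μ i + ∑ j, v j * μ j) := by
  set c := u (Fin.last n)
  have hsplit : ∀ i j, min (u i) (v j) = c + min (u i - c) (v j - c) := fun i j => by
    rw [min_sub_sub_right]; ring
  have hzero : ∀ j, min (u (Fin.last n) - c) (v j - c) = 0 := fun j => by
    rw [sub_self]; exact min_eq_left (sub_nonneg.2 (hlast.trans (hv (Fin.le_last j))))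
  calc ∑ i, ∑ j, min (u i) (v j) * (w i * w j)
      = ∑ i : Fin (n + 1), ∑ j : Fin (p + 1), c * (w i * w j) +
          ∑ i, ∑ j, min (u i - c) (v j - c) * (w i * w j) := by
        simp only [hsplit, add_mul, sum_add_distrib]
    _ = c * ((∑ i : Fin (n + 1), w i) * ∑ j : Fin (p + 1), w j) +
          ∑ i : Fin n, ∑ j, min (u i.castSucc - c) (v j - c) * (w i * w j) := by
        rw [sum_mul_sum, mul_sum, Fin.sum_univ_castSucc
          (fun i : Fin (n + 1) => ∑ j, min (u i - c) (v j - c) * (w i * w j))]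
        simp [hzero, mul_sum]
    _ ≤ c * (K / 2 * (∑ i : Fin (n + 1), μ i + ∑ j : Fin (p + 1), μ j)) +
          K / 2 * (∑ i : Fin n, (u i.castSucc - c) * μ i + ∑ j, (v j - c) * μ j) :=
        add_le_add (mul_le_mul_of_nonneg_left (sum_mul_sum_le_of_sq_le hwμ _ _) hc) ih
    _ = K / 2 * (∑ i, u i * μ i + ∑ j, v j * μ j) := by
        rw [Fin.sum_univ_castSucc (fun i => u i * μ i), Fin.sum_univ_castSucc (fun i => μ i)]
        simp only [sub_mul, sum_sub_distrib, ← mul_sum, Fin.val_castSucc, c]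
        ring

theorem sum_sum_min_mul_le_of_antitone (hK : 0 ≤ K) (hμ : 0 ≤ μ)
    (hwμ : ∀ r, (∑ k ∈ range r, w k) ^ 2 ≤ K * ∑ k ∈ range r, μ k) :
    ∀ {n p : ℕ} (u : Fin n → ℝ) (v : Fin p → ℝ), Antitone u → Antitone v → 0 ≤ u → 0 ≤ v →
      ∑ i, ∑ j, min (u i) (v j) * (w i * w j) ≤ K / 2 * (∑ i, u i * μ i + ∑ j, v j * μ j)
  | 0, _, _, v, _, _, _, hv0 => by
    simpa using mul_nonneg (by positivity : 0 ≤ K / 2)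
      (sum_nonneg fun j _ => mul_nonneg (hv0 j) (hμ j))
  | _, 0, u, _, _, _, hu0, _ => by
    simpa using mul_nonneg (by positivity : 0 ≤ K / 2)
      (sum_nonneg fun i _ => mul_nonneg (hu0 i) (hμ i))
  | n + 1, p + 1, u, v, hu, hv, hu0, hv0 => by
    rcases le_total (u (Fin.last n)) (v (Fin.last p)) with h | h
    · refine sum_sum_min_mul_le_of_peel hwμ hv (hu0 _) h
        (sum_sum_min_mul_le_of_antitone hK hμ hwμ _ _ ?_ ?_ ?_ ?_)
      · exact fun i j hij => sub_le_sub_right (hu (Fin.castSucc_le_castSucc_iff.2 hij)) _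
      · exact fun i j hij => sub_le_sub_right (hv hij) _
      · exact fun i => sub_nonneg.2 (hu (Fin.le_last _))
      · exact fun j => sub_nonneg.2 (h.trans (hv (Fin.le_last _)))
    · rw [sum_sum_min_mul_comm, add_comm (∑ i, u i * μ i)]
      refine sum_sum_min_mul_le_of_peel hwμ hu (hv0 _) h
        (sum_sum_min_mul_le_of_antitone hK hμ hwμ _ _ ?_ ?_ ?_ ?_)
      · exact fun i j hij => sub_le_sub_right (hv (Fin.castSucc_le_castSucc_iff.2 hij)) _
      · exact fun i j hij => sub_le_sub_right (hu hij) _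
      · exact fun i => sub_nonneg.2 (hv (Fin.le_last _))
      · exact fun j => sub_nonneg.2 (h.trans (hu (Fin.le_last _)))
termination_by n p => n + p

theorem sum_sum_min_mul_le_comp_perm (hw : Antitone w) (hw0 : 0 ≤ w) {n p : ℕ}
    (u : Fin n → ℝ) (v : Fin p → ℝ) {σ : Equiv.Perm (Fin n)} {τ : Equiv.Perm (Fin p)}
    (hσ : Antitone (u ∘ σ)) (hτ : Antitone (v ∘ τ)) :
    ∑ i, ∑ j, min (u i) (v j) * (w i * w j) ≤
      ∑ i, ∑ j, min (u (σ i)) (v (τ j)) * (w i * w j) := by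
  have hrows : ∀ (F : Fin n → Fin p → ℝ),
      ∑ i, ∑ j, F i j * (w i * w j) = ∑ i : Fin n, w i * ∑ j, F i j * w j := fun F => by
    simp only [mul_sum]
    exact sum_congr rfl fun i _ => sum_congr rfl fun j _ => by ring
  have hcols : ∀ (F : Fin n → Fin p → ℝ),
      ∑ i, ∑ j, F i j * (w i * w j) = ∑ j : Fin p, w j * ∑ i, F i j * w i := fun F => by
    rw [sum_comm]
    simp only [mul_sum]
    exact sum_congr rfl fun j _ => sum_congr rfl fun i _ => by ring
  rw [hrows, hcols (fun i j => min (u (σ i)) (v (τ j)))]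
  calc ∑ i : Fin n, w i * ∑ j, min (u i) (v j) * w j
      ≤ ∑ i : Fin n, w i * ∑ j, min (u i) (v (τ j)) * w j := by
        refine sum_le_sum fun i _ => mul_le_mul_of_nonneg_left ?_ (hw0 _)
        exact sum_mul_le_sum_comp_perm_mul (g := fun j => min (u i) (v j)) hw
          fun a b hab => min_le_min_left _ (hτ hab)
    _ = ∑ j : Fin p, w j * ∑ i, min (u i) (v (τ j)) * w i := by
        rw [← hrows (fun i j => min (u i) (v (τ j))), hcols]
    _ ≤ ∑ j : Fin p, w j * ∑ i, min (u (σ i)) (v (τ j)) * w i := by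
        refine sum_le_sum fun j _ => mul_le_mul_of_nonneg_left ?_ (hw0 _)
        exact sum_mul_le_sum_comp_perm_mul (g := fun i => min (u i) (v (τ j))) hw
          fun a b hab => min_le_min_right _ (hσ hab)

theorem sum_sum_min_mul_le_of_forall_perm (hK : 0 ≤ K) (hμ : 0 ≤ μ) (hw : Antitone w)
    (hw0 : 0 ≤ w) (hwμ : ∀ r, (∑ k ∈ range r, w k) ^ 2 ≤ K * ∑ k ∈ range r, μ k)
    {n p : ℕ} (u : Fin n → ℝ) (v : Fin p → ℝ) (hu0 : 0 ≤ u) (hv0 : 0 ≤ v) {A B : ℝ}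
    (hA : ∀ σ : Equiv.Perm (Fin n), ∑ k, u (σ k) * μ k ≤ A)
    (hB : ∀ τ : Equiv.Perm (Fin p), ∑ k, v (τ k) * μ k ≤ B) :
    ∑ i, ∑ j, min (u i) (v j) * (w i * w j) ≤ K / 2 * (A + B) := by
  obtain ⟨σ, hσ⟩ := exists_perm_antitone u
  obtain ⟨τ, hτ⟩ := exists_perm_antitone v
  calc ∑ i, ∑ j, min (u i) (v j) * (w i * w j)
      ≤ ∑ i, ∑ j, min (u (σ i)) (v (τ j)) * (w i * w j) :=
        sum_sum_min_mul_le_comp_perm hw hw0 u v hσ hτ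
    _ ≤ K / 2 * (∑ k, u (σ k) * μ k + ∑ k, v (τ k) * μ k) :=
        sum_sum_min_mul_le_of_antitone hK hμ hwμ _ _ hσ hτ (fun k => hu0 (σ k))
          (fun k => hv0 (τ k))
    _ ≤ K / 2 * (A + B) := by gcongr; exacts [hA σ, hB τ]

end MinSum

theorem one_le_harmonic_succ (n : ℕ) : 1 ≤ harmonic (n + 1) := by
  induction n with
  | zero => simp
  | succ n ih => rw [harmonic_succ]; exact ih.trans (le_add_of_nonneg_right (by positivity))

theorem sq_harmonic_le (r : ℕ) :
    harmonic r ^ 2 ≤ 2 * ∑ k ∈ range r, harmonic (k + 1) * (↑(k + 1))⁻¹ := by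
  induction r with
  | zero => simp
  | succ r ih =>
    rw [sum_range_succ, harmonic_succ]
    nlinarith [sq_nonneg ((↑(r + 1) : ℚ)⁻¹)]

section Growth

variable {Λ : ℕ → ℝ} {K : ℝ}

theorem exists_mul_harmonic_le (hpos : ∀ n, 1 ≤ n → 0 < Λ n)
    (hlimsup : ∃ C : ℝ, ∀ᶠ n : ℕ in atTop, Λ n * Real.log n / n ≤ C) :
    ∃ K, 0 ≤ K ∧ ∀ n : ℕ, Λ n * harmonic n ≤ K * n := by
  obtain ⟨C, hC⟩ := hlimsup
  have hev : ∀ᶠ n : ℕ in atTop, Λ n * harmonic n / n ≤ 2 * C := by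
    filter_upwards [hC, eventually_ge_atTop 3] with n hn h3
    have hlog : 1 ≤ Real.log n := by
      rw [Real.le_log_iff_exp_le (by positivity)]
      have h3' : (3 : ℝ) ≤ n := by exact_mod_cast h3
      linarith [Real.exp_one_lt_d9]
    calc Λ n * harmonic n / n ≤ Λ n * (2 * Real.log n) / n := by
          gcongr
          · exact (hpos n (by omega)).le
          · linarith [harmonic_le_one_add_log n]
      _ = 2 * (Λ n * Real.log n / n) := by ring
      _ ≤ 2 * C := by linarith
  obtain ⟨K, hK⟩ := (isBoundedUnder_of_eventually_le hev).bddAbove_range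
  have hbound : ∀ n, Λ n * harmonic n / n ≤ K := fun n => hK ⟨n, rfl⟩
  refine ⟨K, ?_, fun n => ?_⟩
  · exact (hpos 1 le_rfl).le.trans (by simpa using hbound 1)
  · rcases Nat.eq_zero_or_pos n with rfl | hn
    · simp
    · exact (div_le_iff₀ (by positivity)).1 (hbound n)

theorem inv_natCast_succ_le_mul_inv (hpos : ∀ n, 1 ≤ n → 0 < Λ n)
    (hK : ∀ n : ℕ, Λ n * harmonic n ≤ K * n) (n : ℕ) :
    ((n + 1 : ℕ) : ℝ)⁻¹ ≤ K * (Λ (n + 1))⁻¹ := by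
  have hΛ := hpos (n + 1) (by omega)
  have h1 : (1 : ℝ) ≤ harmonic (n + 1) := by exact_mod_cast one_le_harmonic_succ n
  rw [← div_eq_mul_inv, ← one_div, div_le_div_iff₀ (by positivity) hΛ, one_mul]
  nlinarith [hK (n + 1)]

theorem sq_sum_inv_natCast_succ_le (hpos : ∀ n, 1 ≤ n → 0 < Λ n)
    (hK : ∀ n : ℕ, Λ n * harmonic n ≤ K * n) (r : ℕ) :
    (∑ k ∈ range r, ((k + 1 : ℕ) : ℝ)⁻¹) ^ 2 ≤ 2 * K * ∑ k ∈ range r, (Λ (k + 1))⁻¹ := by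
  have hH : ∑ k ∈ range r, ((k + 1 : ℕ) : ℝ)⁻¹ = harmonic r := by simp [harmonic]
  have hterm : ∀ k : ℕ, (harmonic (k + 1) : ℝ) * ((k + 1 : ℕ) : ℝ)⁻¹ ≤ K * (Λ (k + 1))⁻¹ := by
    intro k
    have hΛ := hpos (k + 1) (by omega)
    rw [← div_eq_mul_inv, ← div_eq_mul_inv, div_le_div_iff₀ (by positivity) hΛ, mul_comm]
    exact hK (k + 1)
  calc (∑ k ∈ range r, ((k + 1 : ℕ) : ℝ)⁻¹) ^ 2
      ≤ 2 * ∑ k ∈ range r, (harmonic (k + 1) : ℝ) * ((k + 1 : ℕ) : ℝ)⁻¹ := by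
        have h := (Rat.cast_le (K := ℝ)).2 (sq_harmonic_le r)
        rw [hH]
        push_cast at h ⊢
        exact h
    _ ≤ 2 * ∑ k ∈ range r, K * (Λ (k + 1))⁻¹ :=
        mul_le_mul_of_nonneg_left (sum_le_sum fun k _ => hterm k) zero_le_two
    _ = 2 * K * ∑ k ∈ range r, (Λ (k + 1))⁻¹ := by rw [← mul_sum, mul_assoc]

end Growth

/-- The mixed increment `f(I, J)`. -/
def rectDiff (f : ℝ → ℝ → ℝ) (I J : ℝ × ℝ) : ℝ :=
  f I.1 J.1 - f I.1 J.2 - f I.2 J.1 + f I.2 J.2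

theorem rectDiff_flip (f : ℝ → ℝ → ℝ) (I J : ℝ × ℝ) : rectDiff (flip f) J I = rectDiff f I J := by
  simp only [rectDiff, flip]; ring

theorem abs_rectDiff_le (f : ℝ → ℝ → ℝ) (I J : ℝ × ℝ) :
    |rectDiff f I J| ≤ |f I.2 J.2 - f I.1 J.2| + |f I.2 J.1 - f I.1 J.1| := by
  rw [show rectDiff f I J = (f I.2 J.2 - f I.1 J.2) - (f I.2 J.1 - f I.1 J.1) by
    simp only [rectDiff]; ring]
  exact abs_sub _ _

namespace NonoverlapIcc

variable {n : ℕ} {I : Fin n → ℝ × ℝ}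

theorem mem_Icc (hI : NonoverlapIcc n I) (i : Fin n) :
    (I i).1 ∈ Icc 0 (2 * Real.pi) ∧ (I i).2 ∈ Icc 0 (2 * Real.pi) := by
  obtain ⟨h0, h1, h2⟩ := hI.1 i
  exact ⟨⟨h0, h1.le.trans h2⟩, ⟨h0.trans h1.le, h2⟩⟩

theorem comp_perm (hI : NonoverlapIcc n I) (σ : Equiv.Perm (Fin n)) :
    NonoverlapIcc n (fun i => I (σ i)) :=
  ⟨fun i => hI.1 (σ i), fun i j hij => hI.2 (σ i) (σ j) (σ.injective.ne hij)⟩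

end NonoverlapIcc

section Variation

variable {Λ : ℕ → ℝ} {f : ℝ → ℝ → ℝ} {n m : ℕ}

theorem lamV2_eq_lamV1_flip : LamV2 Λ f = LamV1 Λ (flip f) := rfl

theorem lamSharpV2_eq_lamSharpV1_flip : LamSharpV2 Λ f = LamSharpV1 Λ (flip f) := rfl

theorem sum_div_le_toReal_lamSharpV1 (h : LamSharpV1 Λ f ≠ ⊤) {I : Fin n → ℝ × ℝ}
    (hI : NonoverlapIcc n I) {y : Fin n → ℝ} (hy : ∀ i, y i ∈ Icc 0 (2 * Real.pi)) :
    ∑ i, |f (I i).2 (y i) - f (I i).1 (y i)| / Λ (i + 1) ≤ (LamSharpV1 Λ f).toReal :=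
  (ENNReal.ofReal_le_iff_le_toReal h).1 <|
    le_iSup_of_le n <| le_iSup_of_le I <| le_iSup_of_le y <| le_iSup_of_le hI <|
      le_iSup_of_le hy le_rfl

theorem sum_abs_rectDiff_div_le (hpos : ∀ n, 1 ≤ n → 0 < Λ n) (h : LamSharpV1 Λ f ≠ ⊤)
    {I J : Fin n → ℝ × ℝ} (hI : NonoverlapIcc n I)
    (hJ : ∀ k, (J k).1 ∈ Icc 0 (2 * Real.pi) ∧ (J k).2 ∈ Icc 0 (2 * Real.pi)) :
    ∑ k, |rectDiff f (I k) (J k)| / Λ (k + 1) ≤ 2 * (LamSharpV1 Λ f).toReal := by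
  calc ∑ k, |rectDiff f (I k) (J k)| / Λ (k + 1)
      ≤ ∑ k, (|f (I k).2 (J k).2 - f (I k).1 (J k).2| / Λ (k + 1) +
          |f (I k).2 (J k).1 - f (I k).1 (J k).1| / Λ (k + 1)) :=
        sum_le_sum fun k _ => by
          rw [← add_div]
          exact div_le_div_of_nonneg_right (abs_rectDiff_le f _ _) (hpos _ (by omega)).le
    _ ≤ 2 * (LamSharpV1 Λ f).toReal := by
        rw [sum_add_distrib, two_mul]
        exact add_le_add (sum_div_le_toReal_lamSharpV1 h hI fun k => (hJ k).2)
          (sum_div_le_toReal_lamSharpV1 h hI fun k => (hJ k).1)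

theorem exists_majorant_rectDiff (hpos : ∀ n, 1 ≤ n → 0 < Λ n) (h : LamSharpV1 Λ f ≠ ⊤)
    {I : Fin n → ℝ × ℝ} {J : Fin m → ℝ × ℝ} (hI : NonoverlapIcc n I) (hJ : NonoverlapIcc m J) :
    ∃ u : Fin n → ℝ, 0 ≤ u ∧ (∀ i j, |rectDiff f (I i) (J j)| ≤ u i) ∧
      ∀ σ : Equiv.Perm (Fin n), ∑ k, u (σ k) * (Λ (k + 1))⁻¹ ≤ 2 * (LamSharpV1 Λ f).toReal := by
  rcases isEmpty_or_nonempty (Fin m) with hm | hm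
  · exact ⟨0, le_rfl, fun _ j => isEmptyElim j, fun _ => by simp⟩
  choose g hg using fun i => Finite.exists_max fun j => |rectDiff f (I i) (J j)|
  refine ⟨fun i => |rectDiff f (I i) (J (g i))|, fun _ => abs_nonneg _, hg, fun σ => ?_⟩
  simpa only [← div_eq_mul_inv] using
    sum_abs_rectDiff_div_le hpos h (hI.comp_perm σ) fun k => hJ.mem_Icc (g (σ k))

variable {K : ℝ}

theorem lamV1_natCast_ne_top (hK0 : 0 ≤ K) (hK : ∀ n : ℕ, ((n + 1 : ℕ) : ℝ)⁻¹ ≤ K * (Λ (n + 1))⁻¹)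
    (h : LamSharpV1 Λ f ≠ ⊤) : LamV1 (fun n => (n : ℝ)) f ≠ ⊤ := by
  refine ne_top_of_le_ne_top (ENNReal.ofReal_ne_top (r := K * (LamSharpV1 Λ f).toReal)) ?_
  refine iSup₂_le fun y hy => iSup₂_le fun n I => iSup_le fun hI => ENNReal.ofReal_le_ofReal ?_
  calc ∑ i : Fin n, |f (I i).2 y - f (I i).1 y| / ((i + 1 : ℕ) : ℝ)
      ≤ ∑ i : Fin n, K * (|f (I i).2 y - f (I i).1 y| / Λ (i + 1)) :=
        sum_le_sum fun i _ => by
          rw [div_eq_mul_inv, div_eq_mul_inv, mul_left_comm]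
          exact mul_le_mul_of_nonneg_left (hK i) (abs_nonneg _)
    _ ≤ K * (LamSharpV1 Λ f).toReal := by
        rw [← mul_sum]
        exact mul_le_mul_of_nonneg_left (sum_div_le_toReal_lamSharpV1 h hI fun _ => hy) hK0

theorem lamV12_natCast_ne_top (hpos : ∀ n, 1 ≤ n → 0 < Λ n) (hK0 : 0 ≤ K)
    (hK : ∀ r, (∑ k ∈ range r, ((k + 1 : ℕ) : ℝ)⁻¹) ^ 2 ≤ K * ∑ k ∈ range r, (Λ (k + 1))⁻¹)
    (h₁ : LamSharpV1 Λ f ≠ ⊤) (h₂ : LamSharpV2 Λ f ≠ ⊤) :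
    LamV12 (fun n => (n : ℝ)) f ≠ ⊤ := by
  set B₁ := (LamSharpV1 Λ f).toReal
  set B₂ := (LamSharpV2 Λ f).toReal
  rw [lamSharpV2_eq_lamSharpV1_flip] at h₂
  refine ne_top_of_le_ne_top (ENNReal.ofReal_ne_top (r := K * (B₁ + B₂))) ?_
  refine iSup₂_le fun n m => iSup₂_le fun I J => iSup₂_le fun hI hJ =>
    ENNReal.ofReal_le_ofReal ?_
  obtain ⟨u, hu0, hau, hu⟩ := exists_majorant_rectDiff hpos h₁ hI hJ
  obtain ⟨v, hv0, hav, hv⟩ := exists_majorant_rectDiff hpos h₂ hJ hI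
  have hw : Antitone fun k : ℕ => ((k + 1 : ℕ) : ℝ)⁻¹ := fun a b hab =>
    inv_anti₀ (by positivity) (by exact_mod_cast Nat.succ_le_succ hab)
  calc ∑ i : Fin n, ∑ j : Fin m,
        |rectDiff f (I i) (J j)| / (((i + 1 : ℕ) : ℝ) * ((j + 1 : ℕ) : ℝ))
      ≤ ∑ i, ∑ j, min (u i) (v j) * (((i + 1 : ℕ) : ℝ)⁻¹ * ((j + 1 : ℕ) : ℝ)⁻¹) :=
        sum_le_sum fun i _ => sum_le_sum fun j _ => by
          rw [div_eq_mul_inv, mul_inv]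
          refine mul_le_mul_of_nonneg_right (le_min (hau i j) ?_) (by positivity)
          simpa only [rectDiff_flip] using hav j i
    _ ≤ K / 2 * (2 * B₁ + 2 * B₂) :=
        sum_sum_min_mul_le_of_forall_perm hK0 (fun k => inv_nonneg.2 (hpos _ (by omega)).le) hw
          (fun k => by positivity) hK u v hu0 hv0 hu hv
    _ = K * (B₁ + B₂) := by ring

end Variation

theorem stmt5_general (Λ : ℕ → ℝ)
    (hpos : ∀ n, 1 ≤ n → 0 < Λ n)
    (hlimsup : ∃ C : ℝ, ∀ᶠ n : ℕ in atTop, Λ n * Real.log n / n ≤ C)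
    (f : ℝ → ℝ → ℝ)
    (hsharp : LamSharpV1 Λ f + LamSharpV2 Λ f ≠ ⊤) :
    HarmonicV f ≠ ⊤ := by
  obtain ⟨h₁, h₂⟩ := ENNReal.add_ne_top.1 hsharp
  obtain ⟨K, hK0, hK⟩ := exists_mul_harmonic_le hpos hlimsup
  have hinv := inv_natCast_succ_le_mul_inv hpos hK
  have hV₂ : LamV2 (fun n => (n : ℝ)) f ≠ ⊤ := by
    rw [lamSharpV2_eq_lamSharpV1_flip] at h₂
    rw [lamV2_eq_lamV1_flip]
    exact lamV1_natCast_ne_top hK0 hinv h₂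
  refine ENNReal.add_ne_top.2 ⟨ENNReal.add_ne_top.2 ⟨lamV1_natCast_ne_top hK0 hinv h₁, hV₂⟩, ?_⟩
  exact lamV12_natCast_ne_top hpos (by positivity) (sq_sum_inv_natCast_succ_le hpos hK) h₁ h₂

/-- if `limsup λ_n·log n / n < ∞`, then `Λ#BV ⊆ HBV`. -/
theorem stmt5 (Λ : ℕ → ℝ)
    (hpos : ∀ n, 1 ≤ n → 0 < Λ n) (hmono : ∀ n, 1 ≤ n → Λ n ≤ Λ (n + 1))
    (htop : Tendsto Λ atTop atTop)
    (hlimsup : ∃ C : ℝ, ∀ᶠ n : ℕ in atTop, Λ n * Real.log n / n ≤ C)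
    (f : ℝ → ℝ → ℝ) (hper : Periodic2 f)
    (hsharp : LamSharpV1 Λ f + LamSharpV2 Λ f ≠ ⊤) :
    HarmonicV f ≠ ⊤ :=
  stmt5_general Λ hpos hlimsup f hsharp
end

section
/- Let Λ = {λ_n} be an increasing sequence of positive numbers with λ_n → ∞ such that λ_n/n decreases to 0 and limsup_{n→∞} (λ_n · log n)/n = +∞. Then Λ#BV ⊄ HBV, i.e. there exists a 2π-periodic (in each variable) function f : ℝ² → ℝ with Λ#V₁(f) + Λ#V₂(f) < ∞ whose harmonic variation is infinite. -/
open scoped ENNReal BigOperators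
open Filter Set

/-!
The counterexample lives on disjoint blocks `[c_m, c_{m+1}) ⊂ [π, 2π)`: block `m` carries a comb
`S_m` of `n_m` teeth, and `f = a_m` on `S_m × S_m`, `f = 0` elsewhere.

A difference `f(I, y)` is nonzero only if `y ∈ S_m` and `I` contains one of the `2 n_m` boundary
points of `S_m`. Each point lies in at most two nonoverlapping intervals, so block `m` contributes
at most `a_m ∑_{k ≤ 4 n_m} 1/λ_k =: 2^{-m}` to a `Λ#`-sum, and `Λ#V(f) ≤ 2`.

The `n_m` intervals running from the middle of a tooth to the middle of the next gap all have mixed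
difference `a_m`, so `HV₁,₂(f) ≥ a_m (∑_{k ≤ n_m} 1/k)² ≥ a_m log² n_m`. As `λ_k/k` decreases,
`∑_{k ≤ 4n} 1/λ_k ≤ 8 n log n / λ_n`, whence `a_m log² n_m ≥ 2^{-m} λ_{n_m} log n_m / (8 n_m)`,
which the `limsup` hypothesis makes at least `m` by the choice of `n_m`.
-/

open Finset Function Real

theorem sum_le_sum_range_card_of_antitone {M : Type*} [AddCommMonoid M] [PartialOrder M]
    [IsOrderedAddMonoid M] {g : ℕ → M} (hg : Antitone g) (T : Finset ℕ) :
    ∑ i ∈ T, g i ≤ ∑ k ∈ range #T, g k := by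
  induction T using Finset.induction_on_max with
  | empty => simp
  | insert a s ha ih =>
    have haT : a ∉ s := fun h => (ha a h).false
    have hcard : #s ≤ a := by simpa using Finset.card_le_card fun x hx => mem_range.2 (ha x hx)
    rw [sum_insert haT, card_insert_of_notMem haT, sum_range_succ, add_comm]
    exact add_le_add ih (hg hcard)

section Crossings

variable {n : ℕ} (I : Fin n → ℝ × ℝ)

theorem card_filter_exists_mem_Icc_le (hlt : ∀ i, (I i).1 < (I i).2)
    (hI : Pairwise fun i j => (I i).2 ≤ (I j).1 ∨ (I j).2 ≤ (I i).1) (P : Finset ℝ) :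
    #{i | ∃ p ∈ P, p ∈ Icc (I i).1 (I i).2} ≤ 2 * #P := by
  classical
  set T : Finset (Fin n) := {i | ∃ p ∈ P, p ∈ Icc (I i).1 (I i).2}
  have hT : ∀ i ∈ T, ∃ p ∈ P, p ∈ Icc (I i).1 (I i).2 := fun i hi => (mem_filter.1 hi).2
  choose! p hpP hpI using hT
  -- a point lies in at most two of the intervals, and then it is the right end of one of them
  have hinj : Set.InjOn (fun i => (p i, decide (p i = (I i).2))) T := by
    intro i hi j hj hij
    simp only [Prod.mk.injEq, decide_eq_decide] at hij
    obtain ⟨hp, hend⟩ := hij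
    by_contra hne
    have hi' := hpI i hi
    have hj' := hpI j hj
    rcases hI hne with h | h
    · have : p j = (I j).1 := by linarith [hi'.2, hj'.1]
      exact (hlt j).ne (this ▸ hend.1 (by linarith [hi'.2, hj'.1]))
    · have : p i = (I i).1 := by linarith [hj'.2, hi'.1]
      exact (hlt i).ne (this ▸ hend.2 (by linarith [hj'.2, hi'.1]))
  calc #T ≤ #(P ×ˢ (univ : Finset Bool)) :=
        card_le_card_of_injOn _ (fun i hi => by simp [hpP i hi, em]) hinj
    _ = 2 * #P := by simp [mul_comm]

theorem exists_endpoint_mem_Icc_of_not_iff {ι : Type*} (s : Finset ι) (u v : ι → ℝ) {a b : ℝ}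
    (hab : a ≤ b) (h : ¬(b ∈ ⋃ t ∈ s, Icc (u t) (v t) ↔ a ∈ ⋃ t ∈ s, Icc (u t) (v t))) :
    ∃ p ∈ s.image u ∪ s.image v, p ∈ Icc a b := by
  classical
  simp only [mem_iUnion, Set.mem_Icc, exists_prop] at h
  by_cases hb : ∃ t ∈ s, u t ≤ b ∧ b ≤ v t
  · obtain ⟨t, ht, hub, hbv⟩ := hb
    have hua : a < u t := by
      by_contra! hua
      exact h (iff_of_true ⟨t, ht, hub, hbv⟩ ⟨t, ht, hua, hab.trans hbv⟩)
    exact ⟨u t, mem_union_left _ (mem_image_of_mem u ht), hua.le, hub⟩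
  · obtain ⟨t, ht, hua, hav⟩ : ∃ t ∈ s, u t ≤ a ∧ a ≤ v t := by tauto
    have hvb : v t < b := by
      by_contra! hvb
      exact hb ⟨t, ht, hua.trans hab, hvb⟩
    exact ⟨v t, mem_union_right _ (mem_image_of_mem v ht), hav, hvb.le⟩

open Classical in
noncomputable def crossings (S : Set ℝ) : Finset (Fin n) := {i | ¬((I i).2 ∈ S ↔ (I i).1 ∈ S)}

theorem card_crossings_biUnion_Icc_le (hlt : ∀ i, (I i).1 < (I i).2)
    (hI : Pairwise fun i j => (I i).2 ≤ (I j).1 ∨ (I j).2 ≤ (I i).1)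
    {ι : Type*} (s : Finset ι) (u v : ι → ℝ) :
    #(crossings I (⋃ t ∈ s, Icc (u t) (v t))) ≤ 4 * #s := by
  classical
  calc #(crossings I (⋃ t ∈ s, Icc (u t) (v t)))
      ≤ #{i | ∃ p ∈ s.image u ∪ s.image v, p ∈ Icc (I i).1 (I i).2} := by
        refine Finset.card_le_card fun i hi => ?_
        simp only [crossings, mem_filter, Finset.mem_univ, true_and] at hi ⊢
        exact exists_endpoint_mem_Icc_of_not_iff s u v (hlt i).le hi
    _ ≤ 2 * #(s.image u ∪ s.image v) := card_filter_exists_mem_Icc_le I hlt hI _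
    _ ≤ 2 * (#s + #s) := by
        gcongr
        exact (Finset.card_union_le _ _).trans (add_le_add card_image_le card_image_le)
    _ = 4 * #s := by ring

end Crossings

theorem sum_fin_le_sum_range_of_card_le {g : ℕ → ℝ} (hg0 : ∀ k, 0 ≤ g k) (hg : Antitone g)
    {n K : ℕ} {T : Finset (Fin n)} (hT : #T ≤ K) : ∑ i ∈ T, g i ≤ ∑ k ∈ range K, g k := by
  calc ∑ i ∈ T, g i = ∑ k ∈ T.map Fin.valEmbedding, g k := by rw [sum_map]; rfl
    _ ≤ ∑ k ∈ range #T, g k := by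
        simpa using sum_le_sum_range_card_of_antitone hg (T.map Fin.valEmbedding)
    _ ≤ ∑ k ∈ range K, g k :=
        sum_le_sum_of_subset_of_nonneg (range_subset_range.2 hT) fun k _ _ => hg0 k

section BlockFun

variable {α : Type*} (S : ℕ → Set α) (a : ℕ → ℝ)

noncomputable def blockFun (x y : α) : ℝ :=
  ∑' m, a m * (S m).indicator 1 x * (S m).indicator 1 y

variable {S a}

theorem blockFun_comm (x y : α) : blockFun S a x y = blockFun S a y x := by
  simp only [blockFun, mul_right_comm]

theorem blockFun_congr {x x' y y' : α} (hx : ∀ m, x ∈ S m ↔ x' ∈ S m)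
    (hy : ∀ m, y ∈ S m ↔ y' ∈ S m) : blockFun S a x y = blockFun S a x' y' := by
  classical
  refine tsum_congr fun m => ?_
  simp only [Set.indicator_apply, hx m, hy m, Pi.one_apply]

theorem blockFun_eq_zero_of_forall_notMem_right {y : α} (hy : ∀ m, y ∉ S m) (x : α) :
    blockFun S a x y = 0 := by
  simp [blockFun, hy]

theorem blockFun_of_mem_right (hS : Pairwise (Disjoint on S)) {m : ℕ} {y : α} (hy : y ∈ S m)
    (x : α) : blockFun S a x y = a m * (S m).indicator 1 x := by
  rw [blockFun, tsum_eq_single m fun m' hm' => ?_]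
  · simp [hy]
  · simp [Set.indicator_of_notMem ((hS hm').symm.notMem_of_mem_left hy)]

theorem blockFun_of_mem_of_mem (hS : Pairwise (Disjoint on S)) {m : ℕ} {x y : α}
    (hx : x ∈ S m) (hy : y ∈ S m) : blockFun S a x y = a m := by
  simp [blockFun_of_mem_right hS hy, hx]

open Classical in
theorem abs_blockFun_sub_le (hS : Pairwise (Disjoint on S)) {m : ℕ} (ha : 0 ≤ a m) {y : α}
    (hy : ∀ m', y ∈ S m' → m' = m) (x x' : α) :
    |blockFun S a x' y - blockFun S a x y| ≤ if (x' ∈ S m ↔ x ∈ S m) then 0 else a m := by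
  by_cases hym : y ∈ S m
  · rw [blockFun_of_mem_right hS hym, blockFun_of_mem_right hS hym]
    by_cases hx' : x' ∈ S m <;> by_cases hx : x ∈ S m <;> simp [hx, hx', abs_of_nonneg ha]
  · have hy' : ∀ m', y ∉ S m' := fun m' h => hym (hy m' h ▸ h)
    simp only [blockFun_eq_zero_of_forall_notMem_right hy', sub_self, abs_zero]
    split_ifs <;> simp [ha]

end BlockFun

theorem sum_abs_blockFun_sub_mul_le {S : ℕ → Set ℝ} {a : ℕ → ℝ}
    (hS : Pairwise (Disjoint on S)) (ha : ∀ m, 0 ≤ a m) {g : ℕ → ℝ} (hg0 : ∀ k, 0 ≤ g k)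
    (hg : Antitone g) {n : ℕ}
    (I : Fin n → ℝ × ℝ) (y : Fin n → ℝ) {K : ℕ → ℕ} (hK : ∀ m, #(crossings I (S m)) ≤ K m)
    {w : ℕ → ℝ} (hw : Summable w) (haw : ∀ m, a m * ∑ k ∈ range (K m), g k ≤ w m) :
    ∑ i, |blockFun S a (I i).2 (y i) - blockFun S a (I i).1 (y i)| * g i ≤ ∑' m, w m := by
  classical
  have hblk : ∀ i, ∃ m, ∀ m', y i ∈ S m' → m' = m := by
    intro i
    by_cases h : ∃ m, y i ∈ S m
    · obtain ⟨m, hm⟩ := h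
      exact ⟨m, fun m' hm' => hS.eq (Set.not_disjoint_iff.2 ⟨_, hm', hm⟩)⟩
    · exact ⟨0, fun m' hm' => (h ⟨m', hm'⟩).elim⟩
  -- only the block `blk i` containing `y i` (if any) can make the `i`-th difference nonzero
  choose blk hblk using hblk
  set M := Finset.univ.image blk
  have hterm : ∀ i, |blockFun S a (I i).2 (y i) - blockFun S a (I i).1 (y i)| * g i ≤
      ∑ m ∈ M, if i ∈ crossings I (S m) then a m * g i else 0 := by
    intro i
    refine (mul_le_mul_of_nonneg_right (abs_blockFun_sub_le hS (ha _) (hblk i) _ _)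
      (hg0 i)).trans ?_
    refine le_trans ?_
      (single_le_sum (fun m _ => ?_) (Finset.mem_image_of_mem blk (Finset.mem_univ i)))
    · simp only [crossings, mem_filter, Finset.mem_univ, true_and]
      split_ifs <;> simp
    · split_ifs
      exacts [mul_nonneg (ha m) (hg0 i), le_rfl]
  calc ∑ i, |blockFun S a (I i).2 (y i) - blockFun S a (I i).1 (y i)| * g i
      ≤ ∑ i, ∑ m ∈ M, if i ∈ crossings I (S m) then a m * g i else 0 :=
        sum_le_sum fun i _ => hterm i
    _ = ∑ m ∈ M, a m * ∑ i ∈ crossings I (S m), g i := by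
        rw [sum_comm]
        simp_rw [sum_ite_mem, Finset.univ_inter, mul_sum]
    _ ≤ ∑ m ∈ M, a m * ∑ k ∈ range (K m), g k := by
        gcongr with m
        · exact ha m
        · exact sum_fin_le_sum_range_of_card_le hg0 hg (hK m)
    _ ≤ ∑ m ∈ M, w m := sum_le_sum fun m _ => haw m
    _ ≤ ∑' m, w m := hw.sum_le_tsum M fun m _ =>
        (mul_nonneg (ha m) (sum_nonneg fun k _ => hg0 k)).trans (haw m)

noncomputable def combPt (a b : ℝ) (n : ℕ) (s : ℝ) : ℝ := a + s * (b - a) / (2 * n)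

noncomputable def comb (a b : ℝ) (n : ℕ) : Set ℝ :=
  ⋃ t ∈ range n, Icc (combPt a b n (2 * t)) (combPt a b n (2 * t + 1))

section Comb

variable {a b : ℝ} {n : ℕ}

theorem combPt_strictMono (hab : a < b) (hn : 0 < n) : StrictMono (combPt a b n) := by
  intro s s' h
  have : 0 < b - a := sub_pos.2 hab
  have : (0 : ℝ) < n := Nat.cast_pos.2 hn
  unfold combPt
  gcongr

theorem combPt_mem_Ico (hab : a < b) (hn : 0 < n) {s : ℝ} (hs₀ : 0 ≤ s) (hs : s < 2 * n) :
    combPt a b n s ∈ Ico a b := by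
  have h₀ : combPt a b n 0 = a := by simp [combPt]
  have h₁ : combPt a b n (2 * n) = b := by
    have : (n : ℝ) ≠ 0 := Nat.cast_ne_zero.2 hn.ne'
    simp only [combPt]
    field_simp
    ring
  constructor
  · calc a = combPt a b n 0 := h₀.symm
      _ ≤ combPt a b n s := (combPt_strictMono hab hn).monotone hs₀
  · calc combPt a b n s < combPt a b n (2 * n) := combPt_strictMono hab hn hs
      _ = b := h₁

theorem comb_subset_Ico (hab : a < b) : comb a b n ⊆ Ico a b := by
  intro x hx
  simp only [comb, mem_iUnion, Set.mem_Icc, Finset.mem_range] at hx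
  obtain ⟨t, ht, h₁, h₂⟩ := hx
  have hn : 0 < n := by omega
  have ht' : (t : ℝ) + 1 ≤ n := by exact_mod_cast ht
  have hlo := combPt_mem_Ico hab hn (s := 2 * t) (by positivity) (by linarith)
  have hhi := combPt_mem_Ico hab hn (s := 2 * t + 1) (by positivity) (by linarith)
  exact ⟨hlo.1.trans h₁, h₂.trans_lt hhi.2⟩

theorem combPt_mem_comb (hab : a < b) {t : ℕ} (ht : t < n) :
    combPt a b n (2 * t + 1 / 2) ∈ comb a b n := by
  have hmono := combPt_strictMono hab (n := n) (by omega)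
  simp only [comb, mem_iUnion, Set.mem_Icc, Finset.mem_range]
  exact ⟨t, ht, hmono.monotone (by linarith), hmono.monotone (by linarith)⟩

theorem combPt_notMem_comb (hab : a < b) (t : ℕ) :
    combPt a b n (2 * t + 3 / 2) ∉ comb a b n := by
  simp only [comb, mem_iUnion, Set.mem_Icc, Finset.mem_range, not_exists, not_and]
  intro s hs h₁ h₂
  have hmono := combPt_strictMono hab (n := n) (by omega)
  have hst : (s : ℝ) < t + 1 := by linarith [hmono.le_iff_le.1 h₁]
  have hts : (t : ℝ) < s := by linarith [hmono.le_iff_le.1 h₂]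
  norm_cast at hst hts
  omega

theorem card_crossings_comb_le {m : ℕ} (I : Fin m → ℝ × ℝ) (hlt : ∀ i, (I i).1 < (I i).2)
    (hI : Pairwise fun i j => (I i).2 ≤ (I j).1 ∨ (I j).2 ≤ (I i).1) :
    #(crossings I (comb a b n)) ≤ 4 * n := by
  simpa [comb] using card_crossings_biUnion_Icc_le I hlt hI (range n)
    (fun t => combPt a b n (2 * t)) (fun t => combPt a b n (2 * t + 1))

end Comb

section Weights

variable {Λ : ℕ → ℝ}

theorem sum_one_div_le_mul_harmonic (hpos : ∀ n, 1 ≤ n → 0 < Λ n)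
    (hdec : AntitoneOn (fun n : ℕ => Λ n / n) (Ici 1)) (N : ℕ) :
    ∑ k ∈ range N, 1 / Λ (k + 1) ≤ N / Λ N * harmonic N := by
  rw [harmonic, Rat.cast_sum, mul_sum]
  refine sum_le_sum fun k hk => ?_
  have hk : k + 1 ≤ N := mem_range.1 hk
  have hΛk := hpos (k + 1) (by omega)
  have hΛN := hpos N (by omega)
  have hN : (0 : ℝ) < N := by exact_mod_cast (show 0 < N by omega)
  have h := hdec (mem_Ici.2 (by omega : 1 ≤ k + 1)) (mem_Ici.2 (by omega : 1 ≤ N)) hk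
  simp only [Nat.cast_add, Nat.cast_one] at h
  rw [div_le_div_iff₀ hN (by positivity)] at h
  push_cast
  rw [div_mul_eq_mul_div, div_le_div_iff₀ hΛk (by positivity)]
  field_simp
  linarith

theorem one_add_log_four_mul_le {n : ℕ} (hn : 16 ≤ n) : 1 + Real.log (4 * n) ≤ 2 * Real.log n := by
  have h16 : Real.log 16 ≤ Real.log n := Real.log_le_log (by norm_num) (by exact_mod_cast hn)
  have h4 : Real.log 16 = 2 * Real.log 4 := by
    rw [show (16 : ℝ) = 4 ^ 2 by norm_num, Real.log_pow]; norm_num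
  have hlog4 : 1 < Real.log 4 := by
    rw [show (4 : ℝ) = 2 ^ 2 by norm_num, Real.log_pow]
    push_cast
    linarith [Real.log_two_gt_d9]
  rw [Real.log_mul (by norm_num) (by positivity)]
  linarith

theorem sum_range_four_mul_one_div_le (hpos : ∀ n, 1 ≤ n → 0 < Λ n)
    (hmono : MonotoneOn Λ (Ici 1)) (hdec : AntitoneOn (fun n : ℕ => Λ n / n) (Ici 1))
    {n : ℕ} (hn : 16 ≤ n) :
    ∑ k ∈ range (4 * n), 1 / Λ (k + 1) ≤ 8 * n * Real.log n / Λ n := by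
  have hΛn := hpos n (by omega)
  have hΛ4n : Λ n ≤ Λ (4 * n) := hmono (mem_Ici.2 (by omega)) (mem_Ici.2 (by omega)) (by omega)
  calc ∑ k ∈ range (4 * n), 1 / Λ (k + 1)
      ≤ (4 * n : ℕ) / Λ (4 * n) * harmonic (4 * n) := sum_one_div_le_mul_harmonic hpos hdec _
    _ ≤ 4 * n / Λ n * (1 + Real.log (4 * n)) := by
        push_cast
        gcongr
        · exact_mod_cast (harmonic_pos (by omega)).le
        · exact_mod_cast harmonic_le_one_add_log (4 * n)
    _ ≤ 4 * n / Λ n * (2 * Real.log n) := by gcongr; exact one_add_log_four_mul_le hn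
    _ = 8 * n * Real.log n / Λ n := by ring

end Weights

section Variations

variable {Λ : ℕ → ℝ} {f : ℝ → ℝ → ℝ}

theorem lamSharpV2_eq_lamSharpV1_swap : LamSharpV2 Λ f = LamSharpV1 Λ (swap f) := rfl

theorem lamSharpV1_le_ofReal {C : ℝ}
    (h : ∀ n (I : Fin n → ℝ × ℝ) (y : Fin n → ℝ), NonoverlapIcc n I →
      (∀ i, y i ∈ Icc (0 : ℝ) (2 * π)) →
      ∑ i, |f (I i).2 (y i) - f (I i).1 (y i)| / Λ ((i : ℕ) + 1) ≤ C) :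
    LamSharpV1 Λ f ≤ ENNReal.ofReal C :=
  iSup_le fun n => iSup_le fun I => iSup_le fun y => iSup_le fun hI => iSup_le fun hy =>
    ENNReal.ofReal_le_ofReal (h n I y hI hy)

theorem lamV12_eq_top_of_forall_le
    (h : ∀ r : ℝ, ∃ n, ∃ I : Fin n → ℝ × ℝ, NonoverlapIcc n I ∧ r ≤ ∑ i, ∑ j,
      |f (I i).1 (I j).1 - f (I i).1 (I j).2 - f (I i).2 (I j).1 + f (I i).2 (I j).2| /
        (Λ ((i : ℕ) + 1) * Λ ((j : ℕ) + 1))) :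
    LamV12 Λ f = ⊤ := by
  refine ENNReal.eq_top_of_forall_nnreal_le fun r => ?_
  obtain ⟨n, I, hI, hr⟩ := h r
  refine le_trans ?_ (le_iSup_of_le n (le_iSup_of_le n (le_iSup_of_le I (le_iSup_of_le I
    (le_iSup_of_le hI (le_iSup_of_le hI le_rfl))))))
  rw [← ENNReal.ofReal_coe_nnreal]
  exact ENNReal.ofReal_le_ofReal hr

end Variations

section Counterexample

noncomputable def blockStart (m : ℕ) : ℝ := 2 * π - π / 2 ^ m

theorem blockStart_strictMono : StrictMono blockStart := by
  refine strictMono_nat_of_lt_succ fun m => ?_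
  have : π / 2 ^ (m + 1) < π / 2 ^ m := by
    gcongr
    · norm_num
    · omega
  simp only [blockStart]
  linarith

theorem pi_le_blockStart (m : ℕ) : π ≤ blockStart m := by
  have : π / 2 ^ m ≤ π := div_le_self pi_pos.le (one_le_pow₀ (by norm_num))
  simp only [blockStart]
  linarith

theorem blockStart_lt_two_pi (m : ℕ) : blockStart m < 2 * π := by
  have : 0 < π / 2 ^ m := by positivity
  simp only [blockStart]
  linarith

variable (Λ : ℕ → ℝ) (N : ℕ → ℕ)

noncomputable def teeth (m : ℕ) : Set ℝ := comb (blockStart m) (blockStart (m + 1)) (N m)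

/-- At most `4 * N m` nonoverlapping intervals cross the boundary of `teeth N m`. -/
noncomputable def crossingWeight (m : ℕ) : ℝ := ∑ k ∈ range (4 * N m), 1 / Λ (k + 1)

noncomputable def height (m : ℕ) : ℝ := (1 / 2) ^ m / crossingWeight Λ N m

noncomputable def counterexample (x y : ℝ) : ℝ :=
  blockFun (teeth N) (height Λ N) (toIcoMod two_pi_pos 0 x) (toIcoMod two_pi_pos 0 y)

variable {Λ N}

theorem teeth_subset_Ico (m : ℕ) : teeth N m ⊆ Ico (blockStart m) (blockStart (m + 1)) :=
  comb_subset_Ico (blockStart_strictMono (Nat.lt_succ_self m))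

theorem pairwise_disjoint_teeth : Pairwise (Disjoint on teeth N) :=
  blockStart_strictMono.monotone.pairwise_disjoint_on_Ico_succ.mono fun _ _ h =>
    h.mono (teeth_subset_Ico _) (teeth_subset_Ico _)

theorem teeth_subset_Ioo (m : ℕ) : teeth N m ⊆ Ioo 0 (2 * π) := fun _ hx =>
  ⟨pi_pos.trans_le ((pi_le_blockStart m).trans (teeth_subset_Ico m hx).1),
    (teeth_subset_Ico m hx).2.trans (blockStart_lt_two_pi _)⟩

theorem toIcoMod_mem_teeth_iff {x : ℝ} (hx : x ∈ Icc 0 (2 * π)) (m : ℕ) :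
    toIcoMod two_pi_pos 0 x ∈ teeth N m ↔ x ∈ teeth N m := by
  rcases hx.2.lt_or_eq with hlt | rfl
  · rw [toIcoMod_eq_self _ |>.2 ⟨hx.1, by simpa using hlt⟩]
  · rw [show toIcoMod two_pi_pos 0 (2 * π) = 0 by
      simpa using toIcoMod_apply_right two_pi_pos (0 : ℝ)]
    exact iff_of_false (fun h0 => (teeth_subset_Ioo m h0).1.false)
      (fun h2 => (teeth_subset_Ioo m h2).2.false)

theorem counterexample_eq {x y : ℝ} (hx : x ∈ Icc 0 (2 * π)) (hy : y ∈ Icc 0 (2 * π)) :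
    counterexample Λ N x y = blockFun (teeth N) (height Λ N) x y :=
  blockFun_congr (toIcoMod_mem_teeth_iff hx) (toIcoMod_mem_teeth_iff hy)

theorem counterexample_periodic2 : Periodic2 (counterexample Λ N) := fun x y => by
  simp only [counterexample, toIcoMod_add_right, and_self]

theorem swap_counterexample : swap (counterexample Λ N) = counterexample Λ N := by
  ext x y
  exact blockFun_comm _ _

end Counterexample

section Bounds

variable {Λ : ℕ → ℝ} {N : ℕ → ℕ}

theorem crossingWeight_pos (hpos : ∀ n, 1 ≤ n → 0 < Λ n) {m : ℕ} (hN : 0 < N m) :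
    0 < crossingWeight Λ N m :=
  sum_pos (fun k _ => one_div_pos.2 (hpos _ (by omega))) (nonempty_range_iff.2 (by omega))

theorem height_mul_crossingWeight (hpos : ∀ n, 1 ≤ n → 0 < Λ n) {m : ℕ} (hN : 0 < N m) :
    height Λ N m * crossingWeight Λ N m = (1 / 2) ^ m :=
  div_mul_cancel₀ _ (crossingWeight_pos hpos hN).ne'

theorem height_pos (hpos : ∀ n, 1 ≤ n → 0 < Λ n) {m : ℕ} (hN : 0 < N m) : 0 < height Λ N m :=
  div_pos (by positivity) (crossingWeight_pos hpos hN)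

theorem sum_abs_counterexample_sub_div_le (hpos : ∀ n, 1 ≤ n → 0 < Λ n)
    (hmono : MonotoneOn Λ (Ici 1)) (hN : ∀ m, 0 < N m) {n : ℕ} {I : Fin n → ℝ × ℝ}
    {y : Fin n → ℝ} (hI : NonoverlapIcc n I) (hy : ∀ i, y i ∈ Icc 0 (2 * π)) :
    ∑ i, |counterexample Λ N (I i).2 (y i) - counterexample Λ N (I i).1 (y i)| /
      Λ ((i : ℕ) + 1) ≤ 2 := by
  have hend : ∀ i, (I i).1 ∈ Icc 0 (2 * π) ∧ (I i).2 ∈ Icc 0 (2 * π) := fun i => by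
    obtain ⟨h₀, h₁, h₂⟩ := hI.1 i
    exact ⟨⟨h₀, h₁.le.trans h₂⟩, ⟨h₀.trans h₁.le, h₂⟩⟩
  have hg : Antitone fun k : ℕ => 1 / Λ (k + 1) := fun k k' h =>
    one_div_le_one_div_of_le (hpos _ (by omega)) (hmono (Set.mem_Ici.2 (by omega))
      (Set.mem_Ici.2 (by omega)) (by omega))
  simp_rw [counterexample_eq (hend _).2 (hy _), counterexample_eq (hend _).1 (hy _)]
  rw [sum_congr rfl fun (i : Fin n) _ => div_eq_mul_one_div _ (Λ ((i : ℕ) + 1)),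
    ← tsum_geometric_two]
  exact sum_abs_blockFun_sub_mul_le pairwise_disjoint_teeth (fun m => (height_pos hpos (hN m)).le)
    (fun k => (one_div_pos.2 (hpos _ (by omega))).le) hg I y
    (fun m => card_crossings_comb_le I (fun i => (hI.1 i).2.1) hI.2) summable_geometric_two
    (fun m => (height_mul_crossingWeight hpos (hN m)).le)

variable (N) in
/-- The `t`-th interval runs from the middle of the `t`-th tooth of block `m` to the middle of
the following gap. -/
noncomputable def gridInterval (m : ℕ) (t : Fin (N m)) : ℝ × ℝ :=
  (combPt (blockStart m) (blockStart (m + 1)) (N m) (2 * t + 1 / 2),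
    combPt (blockStart m) (blockStart (m + 1)) (N m) (2 * t + 3 / 2))

theorem gridInterval_mem_Ico {m : ℕ} (t : Fin (N m)) :
    (gridInterval N m t).1 ∈ Ico (blockStart m) (blockStart (m + 1)) ∧
      (gridInterval N m t).2 ∈ Ico (blockStart m) (blockStart (m + 1)) := by
  have ht : (t : ℝ) + 1 ≤ N m := by exact_mod_cast t.isLt
  have hab := blockStart_strictMono (Nat.lt_succ_self m)
  have hN : 0 < N m := by have := t.isLt; omega
  exact ⟨combPt_mem_Ico hab hN (by positivity) (by linarith),
    combPt_mem_Ico hab hN (by positivity) (by linarith)⟩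

theorem nonoverlapIcc_gridInterval (m : ℕ) : NonoverlapIcc (N m) (gridInterval N m) := by
  have hmono (t : Fin (N m)) := combPt_strictMono (blockStart_strictMono (Nat.lt_succ_self m))
    (n := N m) (by have := t.isLt; omega)
  refine ⟨fun t => ⟨?_, hmono t (by linarith), ?_⟩, fun t t' hne => ?_⟩
  · exact (pi_pos.trans_le (pi_le_blockStart m)).le.trans (gridInterval_mem_Ico t).1.1
  · exact ((gridInterval_mem_Ico t).2.2.trans (blockStart_lt_two_pi _)).le
  · rcases Fin.lt_or_lt_of_ne hne with h | h
    · have h' : (t : ℝ) + 1 ≤ t' := by exact_mod_cast h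
      exact Or.inl ((hmono t).monotone (by linarith))
    · have h' : (t' : ℝ) + 1 ≤ t := by exact_mod_cast h
      exact Or.inr ((hmono t).monotone (by linarith))

theorem gridInterval_fst_mem_teeth {m : ℕ} (t : Fin (N m)) : (gridInterval N m t).1 ∈ teeth N m :=
  combPt_mem_comb (blockStart_strictMono (Nat.lt_succ_self m)) t.isLt

theorem gridInterval_snd_notMem_teeth {m : ℕ} (t : Fin (N m)) (m' : ℕ) :
    (gridInterval N m t).2 ∉ teeth N m' := by
  rcases eq_or_ne m' m with rfl | hne
  · exact combPt_notMem_comb (blockStart_strictMono (Nat.lt_succ_self m')) t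
  · exact fun h =>
      (blockStart_strictMono.monotone.pairwise_disjoint_on_Ico_succ hne).notMem_of_mem_left
        (teeth_subset_Ico m' h) (gridInterval_mem_Ico t).2

theorem sum_gridInterval_eq (m : ℕ) :
    ∑ i, ∑ j, |counterexample Λ N (gridInterval N m i).1 (gridInterval N m j).1 -
        counterexample Λ N (gridInterval N m i).1 (gridInterval N m j).2 -
        counterexample Λ N (gridInterval N m i).2 (gridInterval N m j).1 +
        counterexample Λ N (gridInterval N m i).2 (gridInterval N m j).2| /
      ((((i : ℕ) + 1 : ℕ) : ℝ) * (((j : ℕ) + 1 : ℕ) : ℝ)) =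
      |height Λ N m| * (harmonic (N m) : ℝ) ^ 2 := by
  have hIcc : ∀ x ∈ Ico (blockStart m) (blockStart (m + 1)), x ∈ Icc 0 (2 * π) := fun x hx =>
    ⟨(pi_pos.trans_le (pi_le_blockStart m)).le.trans hx.1,
      (hx.2.trans (blockStart_lt_two_pi _)).le⟩
  have hterm : ∀ i j, |counterexample Λ N (gridInterval N m i).1 (gridInterval N m j).1 -
        counterexample Λ N (gridInterval N m i).1 (gridInterval N m j).2 -
        counterexample Λ N (gridInterval N m i).2 (gridInterval N m j).1 +
        counterexample Λ N (gridInterval N m i).2 (gridInterval N m j).2| = |height Λ N m| := by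
    intro i j
    have hi := gridInterval_mem_Ico i
    have hj := gridInterval_mem_Ico j
    rw [counterexample_eq (hIcc _ hi.1) (hIcc _ hj.1),
      counterexample_eq (hIcc _ hi.1) (hIcc _ hj.2),
      counterexample_eq (hIcc _ hi.2) (hIcc _ hj.1),
      counterexample_eq (hIcc _ hi.2) (hIcc _ hj.2),
      blockFun_of_mem_of_mem pairwise_disjoint_teeth (gridInterval_fst_mem_teeth i)
        (gridInterval_fst_mem_teeth j),
      blockFun_eq_zero_of_forall_notMem_right (gridInterval_snd_notMem_teeth j),
      blockFun_eq_zero_of_forall_notMem_right (gridInterval_snd_notMem_teeth j),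
      blockFun_comm, blockFun_eq_zero_of_forall_notMem_right (gridInterval_snd_notMem_teeth i)]
    simp
  simp_rw [hterm, harmonic, Rat.cast_sum, sq, sum_mul_sum, mul_sum]
  rw [← Fin.sum_univ_eq_sum_range]
  refine sum_congr rfl fun i _ => ?_
  rw [← Fin.sum_univ_eq_sum_range]
  refine sum_congr rfl fun j _ => ?_
  push_cast
  field_simp

theorem le_height_mul_harmonic_sq (hpos : ∀ n, 1 ≤ n → 0 < Λ n)
    (hmono : MonotoneOn Λ (Ici 1)) (hdec : AntitoneOn (fun n : ℕ => Λ n / n) (Ici 1)) {m : ℕ}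
    (hN : 16 ≤ N m) (hbig : 8 * 2 ^ m * m ≤ Λ (N m) * Real.log (N m) / N m) :
    (m : ℝ) ≤ |height Λ N m| * (harmonic (N m) : ℝ) ^ 2 := by
  have hn : (1 : ℝ) < N m := by exact_mod_cast (by omega : 1 < N m)
  have hΛ := hpos (N m) (by omega)
  have hL : 0 < Real.log (N m) := Real.log_pos hn
  have hW : crossingWeight Λ N m ≤ 8 * N m * Real.log (N m) / Λ (N m) :=
    sum_range_four_mul_one_div_le hpos hmono hdec hN
  have hH : Real.log (N m) ≤ harmonic (N m) := by
    refine (Real.log_le_log (by linarith) (by linarith)).trans (b := Real.log (N m + 1)) ?_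
    exact_mod_cast log_add_one_le_harmonic (N m)
  rw [abs_of_pos (height_pos hpos (by omega))]
  calc (m : ℝ) = (1 / 2) ^ m * (8 * 2 ^ m * m) / 8 := by
        field_simp
        rw [mul_assoc, ← mul_pow]
        norm_num
    _ ≤ (1 / 2) ^ m * (Λ (N m) * Real.log (N m) / N m) / 8 := by gcongr
    _ = (1 / 2) ^ m / (8 * N m * Real.log (N m) / Λ (N m)) * Real.log (N m) ^ 2 := by
        field_simp
    _ ≤ (1 / 2) ^ m / crossingWeight Λ N m * Real.log (N m) ^ 2 := by
        gcongr
        exact crossingWeight_pos hpos (by omega)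
    _ ≤ height Λ N m * (harmonic (N m) : ℝ) ^ 2 := by
        rw [height]
        gcongr
        exact div_nonneg (by positivity) (crossingWeight_pos hpos (by omega)).le

end Bounds

theorem stmt6_general (Λ : ℕ → ℝ)
    (hpos : ∀ n, 1 ≤ n → 0 < Λ n) (hmono : ∀ n, 1 ≤ n → Λ n ≤ Λ (n + 1))
    (hdec : ∀ n, 1 ≤ n → Λ (n + 1) / ((n : ℝ) + 1) ≤ Λ n / (n : ℝ))
    (hlimsup : ∀ M : ℝ, ∃ᶠ n : ℕ in atTop, M < Λ n * Real.log n / n) :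
    ∃ f : ℝ → ℝ → ℝ, Periodic2 f ∧
      LamSharpV1 Λ f + LamSharpV2 Λ f ≠ ⊤ ∧
      HarmonicV f = ⊤ := by
  have hmono' : MonotoneOn Λ (Ici 1) := monotoneOn_nat_Ici_of_le_succ hmono
  have hdec' : AntitoneOn (fun n : ℕ => Λ n / n) (Ici 1) :=
    antitoneOn_nat_Ici_of_succ_le fun n hn => by simpa using hdec n hn
  choose N hN using fun m : ℕ =>
    ((hlimsup (8 * 2 ^ m * m)).and_eventually (eventually_ge_atTop 16)).exists
  have hN0 m : 0 < N m := by have := (hN m).2; omega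
  have hsharp : LamSharpV1 Λ (counterexample Λ N) ≤ ENNReal.ofReal 2 :=
    lamSharpV1_le_ofReal fun _ _ _ hI hy =>
      sum_abs_counterexample_sub_div_le hpos hmono' hN0 hI hy
  refine ⟨counterexample Λ N, counterexample_periodic2, ?_, ?_⟩
  · rw [lamSharpV2_eq_lamSharpV1_swap, swap_counterexample]
    exact ENNReal.add_ne_top.2 ⟨(hsharp.trans_lt ENNReal.ofReal_lt_top).ne,
      (hsharp.trans_lt ENNReal.ofReal_lt_top).ne⟩
  · rw [HarmonicV, lamV12_eq_top_of_forall_le fun r => ?_, add_top]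
    obtain ⟨m, hm⟩ := exists_nat_ge r
    refine ⟨N m, gridInterval N m, nonoverlapIcc_gridInterval m, hm.trans ?_⟩
    rw [sum_gridInterval_eq]
    exact le_height_mul_harmonic_sq hpos hmono' hdec' (hN m).2 (hN m).1.le

/-- if `λ_n/n ↓ 0` and `limsup λ_n·log n / n = +∞`, then `Λ#BV ⊄ HBV`. -/
theorem stmt6 (Λ : ℕ → ℝ)
    (hpos : ∀ n, 1 ≤ n → 0 < Λ n) (hmono : ∀ n, 1 ≤ n → Λ n ≤ Λ (n + 1))
    (htop : Tendsto Λ atTop atTop)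
    (hdec : ∀ n, 1 ≤ n → Λ (n + 1) / ((n : ℝ) + 1) ≤ Λ n / (n : ℝ))
    (hzero : Tendsto (fun n : ℕ => Λ n / (n : ℝ)) atTop (nhds 0))
    (hlimsup : ∀ M : ℝ, ∃ᶠ n : ℕ in atTop, M < Λ n * Real.log n / n) :
    ∃ f : ℝ → ℝ → ℝ, Periodic2 f ∧
      LamSharpV1 Λ f + LamSharpV2 Λ f ≠ ⊤ ∧
      HarmonicV f = ⊤ :=
  stmt6_general Λ hpos hmono hdec hlimsup
end

section
/- Let Φ and Ψ be conjugate functions in the sense of Young, i.e. a·b ≤ Φ(a) + Ψ(b) for all a,b ≥ 0, where Φ is a strictly increasing continuous function on [0,∞) with Φ(0) = 0. If Σ_{n=2}^∞ Ψ((log n)/n) < ∞, then B#V_Φ ⊆ {n/log n}#BV, i.e. every 2π-periodic (in each variable) function f : ℝ² → ℝ in B#V_Φ belongs to Λ#BV for the sequence λ_n = n/log n. -/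
open scoped ENNReal BigOperators
open Filter Set

lemma aux7 (Φ Ψ : ℝ → ℝ)
    (hmono : MonotoneOn Φ (Ici (0:ℝ))) (h0 : Φ 0 = 0)
    (hyoung : ∀ a b : ℝ, 0 ≤ a → 0 ≤ b → a * b ≤ Φ a + Ψ b)
    (hsum : Summable fun n : ℕ => Ψ (Real.log ((n : ℝ) + 2) / ((n : ℝ) + 2)))
    (f : ℝ → ℝ → ℝ) (h1 : PhiSharpV1 Φ f ≠ ⊤) :
    LamSharpV1 nlogSeq f ≠ ⊤ := by
  classical
  set M := (PhiSharpV1 Φ f).toReal with hM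
  have hΦnn : ∀ t : ℝ, 0 ≤ t → 0 ≤ Φ t := by
    intro t ht
    have := hmono (mem_Ici.mpr le_rfl) (mem_Ici.mpr ht) ht
    linarith [this]
  have hΨnn : ∀ b : ℝ, 0 ≤ b → 0 ≤ Ψ b := by
    intro b hb
    have := hyoung 0 b le_rfl hb
    simpa [h0] using this
  have key : ∀ (n : ℕ) (I : Fin n → ℝ × ℝ) (y : Fin n → ℝ),
      NonoverlapIcc n I → (∀ i, y i ∈ Icc (0:ℝ) (2 * Real.pi)) →
      ∑ i, Φ |f (I i).2 (y i) - f (I i).1 (y i)| ≤ M := by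
    intro n I y hI hy
    have hle : ENNReal.ofReal (∑ i, Φ |f (I i).2 (y i) - f (I i).1 (y i)|)
        ≤ PhiSharpV1 Φ f := by
      unfold PhiSharpV1
      exact le_iSup_of_le n (le_iSup_of_le I (le_iSup_of_le y
        (le_iSup_of_le hI (le_iSup_of_le hy le_rfl))))
    exact (ENNReal.ofReal_le_iff_le_toReal h1).mp hle
  have hMnn : 0 ≤ M := ENNReal.toReal_nonneg
  set c : ℝ := Real.log 2 / 2 with hcdef
  have hc : 0 < c := by
    have := Real.log_pos (by norm_num : (1:ℝ) < 2)
    positivity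
  set B : ℝ := (M + Ψ c) / c with hBdef
  have hB : 0 ≤ B := div_nonneg (by have := hΨnn c hc.le; linarith) hc.le
  have hsingle : ∀ (a b yy : ℝ), 0 ≤ a → a < b → b ≤ 2 * Real.pi →
      yy ∈ Icc (0:ℝ) (2 * Real.pi) → |f b yy - f a yy| ≤ B := by
    intro a b yy ha hab hb hyy
    have h := key 1 (fun _ => (a, b)) (fun _ => yy)
      ⟨fun i => ⟨ha, hab, hb⟩, fun i j hij => absurd (Subsingleton.elim i j) hij⟩
      (fun i => hyy)
    simp only [Fin.sum_univ_one] at h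
    have hyg := hyoung |f b yy - f a yy| c (abs_nonneg _) hc.le
    rw [hBdef, le_div_iff₀ hc]
    linarith
  set ψ : ℕ → ℝ := fun k => if k = 0 then B else
    Ψ (Real.log ((k : ℝ) + 1) / ((k : ℝ) + 1)) with hψdef
  have hψshift : (fun n : ℕ => ψ (n + 1)) =
      fun n : ℕ => Ψ (Real.log ((n : ℝ) + 2) / ((n : ℝ) + 2)) := by
    funext n
    simp only [hψdef, Nat.succ_ne_zero, if_false]
    push_cast
    ring_nf
  have hψsum : Summable ψ := by
    have h2 := hψshift ▸ hsum
    exact (summable_nat_add_iff 1).mp h2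
  have hψnn : ∀ k, 0 ≤ ψ k := by
    intro k
    cases k with
    | zero => simpa [hψdef] using hB
    | succ m =>
      simp only [hψdef, Nat.succ_ne_zero, if_false]
      refine hΨnn _ (div_nonneg (Real.log_nonneg ?_) (by positivity))
      push_cast
      linarith [Nat.cast_nonneg (α := ℝ) m]
  have hψtsum : ∀ n : ℕ, ∑ k ∈ Finset.range n, ψ k ≤ ∑' k, ψ k := by
    intro n
    exact Summable.sum_le_tsum _ (fun k _ => hψnn k) hψsum
  have hle : LamSharpV1 nlogSeq f ≤ ENNReal.ofReal (M + ∑' k, ψ k) := by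
    unfold LamSharpV1
    refine iSup_le fun n => iSup_le fun I => iSup_le fun y =>
      iSup_le fun hI => iSup_le fun hy => ENNReal.ofReal_le_ofReal ?_
    have perterm : ∀ i : Fin n,
        |f (I i).2 (y i) - f (I i).1 (y i)| / nlogSeq ((i : ℕ) + 1)
          ≤ Φ |f (I i).2 (y i) - f (I i).1 (y i)| + ψ (i : ℕ) := by
      intro i
      set d := |f (I i).2 (y i) - f (I i).1 (y i)| with hd
      have hdnn : 0 ≤ d := abs_nonneg _
      have hdB : d ≤ B := hsingle (I i).1 (I i).2 (y i)
        (hI.1 i).1 (hI.1 i).2.1 (hI.1 i).2.2 (hy i)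
      have hΦd : 0 ≤ Φ d := hΦnn d hdnn
      cases hk : (i : ℕ) with
      | zero =>
        have h1' : nlogSeq 1 = 1 := by simp [nlogSeq]
        have h2' : ψ 0 = B := by simp [hψdef]
        simp only [zero_add, h1', div_one, h2']
        linarith
      | succ k =>
        set t : ℝ := (k : ℝ) + 2 with ht
        have ht1 : (1:ℝ) < t := by
          have := Nat.cast_nonneg (α := ℝ) k
          rw [ht]; linarith
        have htpos : (0:ℝ) < t := by linarith
        have hlog : 0 < Real.log t := Real.log_pos ht1
        have hcast : ((k + 1 + 1 : ℕ) : ℝ) = t := by push_cast [ht]; ring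
        have hnl : nlogSeq (k + 1 + 1) = t / Real.log t := by
          have hnot : ¬ (k + 1 + 1 ≤ 1) := by omega
          simp only [nlogSeq, hnot, if_false]
          rw [hcast]
        have hψk : ψ (k + 1) = Ψ (Real.log t / t) := by
          have hcast2 : ((k + 1 : ℕ) : ℝ) + 1 = t := by push_cast [ht]; ring
          simp only [hψdef, Nat.succ_ne_zero, if_false, hcast2]
        rw [hnl, hψk, div_div_eq_mul_div, mul_div_assoc]
        exact hyoung d (Real.log t / t) hdnn (div_nonneg hlog.le htpos.le)
    calc ∑ i, |f (I i).2 (y i) - f (I i).1 (y i)| / nlogSeq ((i : ℕ) + 1)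
        ≤ ∑ i, (Φ |f (I i).2 (y i) - f (I i).1 (y i)| + ψ (i : ℕ)) :=
          Finset.sum_le_sum fun i _ => perterm i
      _ = (∑ i, Φ |f (I i).2 (y i) - f (I i).1 (y i)|) + ∑ i : Fin n, ψ (i : ℕ) :=
          Finset.sum_add_distrib
      _ ≤ M + ∑' k, ψ k := by
          refine add_le_add (key n I y hI hy) ?_
          rw [Fin.sum_univ_eq_sum_range]
          exact hψtsum n
  exact ne_top_of_le_ne_top ENNReal.ofReal_ne_top hle

/-- if `Φ, Ψ` are Young-conjugate and `Σ Ψ(log n / n) < ∞`, then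
`B#V_Φ ⊆ {n/log n}#BV`. -/
theorem stmt7 (Φ Ψ : ℝ → ℝ)
    (hmono : StrictMonoOn Φ (Ici (0:ℝ))) (hcont : ContinuousOn Φ (Ici (0:ℝ)))
    (h0 : Φ 0 = 0)
    (hyoung : ∀ a b : ℝ, 0 ≤ a → 0 ≤ b → a * b ≤ Φ a + Ψ b)
    (hsum : Summable fun n : ℕ => Ψ (Real.log ((n : ℝ) + 2) / ((n : ℝ) + 2)))
    (f : ℝ → ℝ → ℝ) (hper : Periodic2 f)
    (h1 : PhiSharpV1 Φ f ≠ ⊤) (h2 : PhiSharpV2 Φ f ≠ ⊤) :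
    LamSharpV1 nlogSeq f + LamSharpV2 nlogSeq f ≠ ⊤ := by
  have hA := aux7 Φ Ψ hmono.monotoneOn h0 hyoung hsum f h1
  have hB : LamSharpV2 nlogSeq f ≠ ⊤ := by
    have e1 : PhiSharpV2 Φ f = PhiSharpV1 Φ (fun a b => f b a) := rfl
    have e2 : LamSharpV2 nlogSeq f = LamSharpV1 nlogSeq (fun a b => f b a) := rfl
    rw [e2]
    exact aux7 Φ Ψ hmono.monotoneOn h0 hyoung hsum _ (e1 ▸ h2)
  exact ENNReal.add_ne_top.mpr ⟨hA, hB⟩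
end

section
/- Let f : ℝ² → ℝ be 2π-periodic in each variable and suppose Σ_{n=2}^∞ v_s#(n,f)·log n / n² < ∞ for s = 1,2. Then f ∈ {n/log n}#BV. -/
open scoped ENNReal BigOperators
open Filter Set

/-!
Fix nonoverlapping intervals `I₁, …, Iₙ` and points `y₁, …, yₙ`, and put `aᵢ = |f(Iᵢ, yᵢ)|`.
Any `k` of the intervals form an admissible collection, so `a₁ + ⋯ + a_k ≤ v₁#(k, f)`; and
`v₁#(·, f)` is nondecreasing, because splitting an interval can only increase the sum. The weight
`w_k = (1 + log k)/k` decreases to `0` and dominates `1/λ_k = log k / k`, so Abel summation gives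
`Σ aᵢ/λᵢ ≤ Σ_k v₁#(k, f) (w_k - w_{k+1})`, uniformly in the collection. Finally
`w_k - w_{k+1} = O(log k / k²)`, so the hypothesis makes the right-hand side finite. The second
variable is the first one of the transposed function.
-/

open Filter Topology Finset

lemma hasSum_tail_sub_succ {W : ℕ → ℝ} (hW : Antitone W) (hW0 : Tendsto W atTop (𝓝 0))
    (k : ℕ) : HasSum (fun j => if k ≤ j then W j - W (j + 1) else 0) (W k) := by
  rw [← hasSum_nat_add_iff' k]
  have hpre : ∑ i ∈ range k, (if k ≤ i then W i - W (i + 1) else 0) = 0 :=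
    sum_eq_zero fun i hi => if_neg (by simpa using hi)
  simp only [hpre, sub_zero, le_add_iff_nonneg_left, zero_le, if_true]
  refine (hasSum_iff_tendsto_nat_of_nonneg (fun j => sub_nonneg.2 (hW (by omega))) _).2 ?_
  have h := (tendsto_const_nhds (x := W k)).sub (hW0.comp (tendsto_add_atTop_nat k))
  rw [sub_zero] at h
  refine h.congr fun N => ?_
  have htel := sum_range_sub' (fun j => W (j + k)) N
  simp only [add_right_comm _ 1 k, zero_add] at htel
  simp [htel]

/-- Abel summation: expand `W i` as the telescoping tail `∑_{j ≥ i} (W j - W (j + 1))` and swap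
the sums. -/
lemma sum_mul_ofReal_le_tsum {n : ℕ} (a : Fin n → ℝ≥0∞) (v : ℕ → ℝ≥0∞) {W : ℕ → ℝ}
    (hW : Antitone W) (hW0 : Tendsto W atTop (𝓝 0))
    (ha : ∀ m, ∑ i ∈ univ.filter (fun i : Fin n => (i : ℕ) < m), a i ≤ v m) :
    ∑ i, a i * ENNReal.ofReal (W i) ≤ ∑' j, ENNReal.ofReal (W j - W (j + 1)) * v (j + 1) := by
  have htel : ∀ k, ENNReal.ofReal (W k) =
      ∑' j, if k ≤ j then ENNReal.ofReal (W j - W (j + 1)) else 0 := fun k => by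
    have h := hasSum_tail_sub_succ hW hW0 k
    rw [← h.tsum_eq, ENNReal.ofReal_tsum_of_nonneg _ h.summable]
    · simp only [apply_ite ENNReal.ofReal, ENNReal.ofReal_zero]
    · intro j
      split_ifs
      · exact sub_nonneg.2 (hW (Nat.le_succ j))
      · exact le_rfl
  calc ∑ i, a i * ENNReal.ofReal (W i)
      = ∑' j, ENNReal.ofReal (W j - W (j + 1)) *
          ∑ i ∈ univ.filter (fun i : Fin n => (i : ℕ) < j + 1), a i := by
        simp_rw [htel, ← ENNReal.tsum_mul_left]
        rw [← Summable.tsum_finsetSum (fun _ _ => ENNReal.summable)]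
        congr 1; ext j
        rw [sum_filter, mul_sum]
        refine sum_congr rfl fun i _ => ?_
        simp only [Nat.lt_succ_iff, mul_ite, mul_zero]
        split_ifs <;> ring
    _ ≤ ∑' j, ENNReal.ofReal (W j - W (j + 1)) * v (j + 1) := by
        gcongr with j
        exact ha (j + 1)

lemma NonoverlapIcc.comp_injective {m n : ℕ} {I : Fin n → ℝ × ℝ} (hI : NonoverlapIcc n I)
    {e : Fin m → Fin n} (he : Function.Injective e) : NonoverlapIcc m (I ∘ e) :=
  ⟨fun i => hI.1 (e i), fun _ _ hij => hI.2 _ _ (he.ne hij)⟩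

lemma NonoverlapIcc.snoc_split {n : ℕ} {I : Fin (n + 1) → ℝ × ℝ} (hI : NonoverlapIcc (n + 1) I)
    (i : Fin (n + 1)) {μ : ℝ} (h₁ : (I i).1 < μ) (h₂ : μ < (I i).2) :
    NonoverlapIcc (n + 2)
      (Fin.snoc (α := fun _ => ℝ × ℝ) (Function.update I i ((I i).1, μ)) (μ, (I i).2)) := by
  obtain ⟨hbd, hsep⟩ := hI
  obtain ⟨h0, -, h2π⟩ := hbd i
  refine ⟨fun k => ?_, fun k l hkl => ?_⟩
  · induction k using Fin.lastCases with
    | last => simp only [Fin.snoc_last]; exact ⟨by linarith, h₂, h2π⟩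
    | cast k =>
      simp only [Fin.snoc_castSucc, Function.update_apply]
      split_ifs with hk
      · exact ⟨h0, h₁, by linarith⟩
      · exact hbd k
  · induction k using Fin.lastCases <;> induction l using Fin.lastCases
    case last.last => exact absurd rfl hkl
    case last.cast l =>
      simp only [Fin.snoc_castSucc, Fin.snoc_last, Function.update_apply]
      split_ifs with hl
      · exact Or.inr le_rfl
      · rcases hsep l i hl with h | h
        · exact Or.inr (h.trans h₁.le)
        · exact Or.inl h
    case cast.last k =>
      simp only [Fin.snoc_castSucc, Fin.snoc_last, Function.update_apply]
      split_ifs with hk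
      · exact Or.inl le_rfl
      · rcases hsep k i hk with h | h
        · exact Or.inl (h.trans h₁.le)
        · exact Or.inr h
    case cast.cast k l =>
      have hkl : k ≠ l := fun h => hkl (congrArg _ h)
      simp only [Fin.snoc_castSucc, Function.update_apply]
      split_ifs with hk hl hl
      · exact absurd (hk.trans hl.symm) hkl
      · subst hk
        rcases hsep k l hkl with h | h
        · exact Or.inl (h₂.le.trans h)
        · exact Or.inr h
      · subst hl
        rcases hsep k l hkl with h | h
        · exact Or.inl h
        · exact Or.inr (h₂.le.trans h)
      · exact hsep k l hkl

lemma sum_ofReal_le_modSharpV1 (f : ℝ → ℝ → ℝ) {n : ℕ} {I : Fin n → ℝ × ℝ} {y : Fin n → ℝ}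
    (hI : NonoverlapIcc n I) (hy : ∀ i, y i ∈ Set.Icc 0 (2 * Real.pi)) (s : Finset (Fin n)) :
    ∑ i ∈ s, ENNReal.ofReal |f (I i).2 (y i) - f (I i).1 (y i)| ≤ modSharpV1 f #s := by
  set e := s.orderEmbOfFin rfl
  conv_lhs => rw [← s.image_orderEmbOfFin_univ rfl, sum_image e.injective.injOn,
    ← ENNReal.ofReal_sum_of_nonneg fun _ _ => abs_nonneg _]
  exact le_iSup_of_le (I ∘ e) <| le_iSup_of_le (y ∘ e) <|
    le_iSup_of_le (hI.comp_injective e.injective) <| le_iSup_of_le (fun i => hy _) le_rfl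

/-- Splitting the first interval at its midpoint gives one more interval and, by the triangle
inequality, no smaller a sum. -/
lemma modSharpV1_le_succ (f : ℝ → ℝ → ℝ) (m : ℕ) : modSharpV1 f m ≤ modSharpV1 f (m + 1) := by
  refine iSup_le fun I => iSup_le fun y => iSup_le fun hI => iSup_le fun hy => ?_
  cases m with
  | zero => simp
  | succ n =>
    set α := (I 0).1
    set β := (I 0).2
    obtain ⟨-, hαβ, -⟩ := hI.1 0
    have h₁ : α < (α + β) / 2 := by linarith
    have h₂ : (α + β) / 2 < β := by linarith
    have hy' : ∀ k, Fin.snoc (α := fun _ => ℝ) y (y 0) k ∈ Set.Icc 0 (2 * Real.pi) := fun k => by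
      induction k using Fin.lastCases <;> simp only [Fin.snoc_last, Fin.snoc_castSucc, hy]
    refine le_trans ?_ (le_iSup_of_le _ <| le_iSup_of_le _ <|
      le_iSup_of_le (hI.snoc_split 0 h₁ h₂) <| le_iSup_of_le hy' le_rfl)
    apply ENNReal.ofReal_le_ofReal
    simp only [Fin.sum_univ_castSucc (n := n + 1), Fin.snoc_castSucc, Fin.snoc_last]
    rw [Fin.sum_univ_succ, Fin.sum_univ_succ]
    simp only [Function.update_self, Function.update_of_ne (Fin.succ_ne_zero _)]
    have := abs_sub_le (f β (y 0)) (f ((α + β) / 2) (y 0)) (f α (y 0))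
    linarith

lemma modSharpV1_mono (f : ℝ → ℝ → ℝ) : Monotone (modSharpV1 f) :=
  monotone_nat_of_le_succ (modSharpV1_le_succ f)

theorem lamSharpV1_le_tsum {Λ W : ℕ → ℝ} (hW : Antitone W) (hW0 : Tendsto W atTop (𝓝 0))
    (hΛW : ∀ k, (Λ (k + 1))⁻¹ ≤ W k) (f : ℝ → ℝ → ℝ) :
    LamSharpV1 Λ f ≤ ∑' j, ENNReal.ofReal (W j - W (j + 1)) * modSharpV1 f (j + 1) := by
  refine iSup_le fun n => iSup_le fun I => iSup_le fun y => iSup_le fun hI => iSup_le fun hy => ?_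
  set a : Fin n → ℝ := fun i => |f (I i).2 (y i) - f (I i).1 (y i)|
  have ha : ∀ i, 0 ≤ a i := fun i => abs_nonneg _
  have hW_nonneg : ∀ k, 0 ≤ W k := hW.le_of_tendsto hW0
  calc ENNReal.ofReal (∑ i, a i / Λ (i + 1))
      ≤ ENNReal.ofReal (∑ i, a i * W i) := by
        gcongr with i
        rw [div_eq_mul_inv]
        exact mul_le_mul_of_nonneg_left (hΛW i) (ha i)
    _ = ∑ i, ENNReal.ofReal (a i) * ENNReal.ofReal (W i) := by
        rw [ENNReal.ofReal_sum_of_nonneg fun i _ => mul_nonneg (ha i) (hW_nonneg i)]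
        simp only [ENNReal.ofReal_mul (ha _)]
    _ ≤ _ := sum_mul_ofReal_le_tsum _ (modSharpV1 f) hW hW0 fun m =>
        (sum_ofReal_le_modSharpV1 f hI hy _).trans
          (modSharpV1_mono f (by rw [Fin.card_filter_val_lt]; exact min_le_right n m))

noncomputable def logWeight (x : ℝ) : ℝ := (1 + Real.log x) / x

lemma logWeight_succ_le {x : ℝ} (hx : 1 ≤ x) : logWeight (x + 1) ≤ logWeight x := by
  have hlog : Real.log (x + 1) ≤ Real.log x + 1 / x := by
    have h := Real.log_le_sub_one_of_pos (x := (x + 1) / x) (by positivity)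
    rw [Real.log_div (by positivity) (by positivity)] at h
    have : (x + 1) / x - 1 = 1 / x := by field_simp; ring
    linarith
  have hx1 : x * (1 / x) = 1 := by field_simp
  have hlogx : 0 ≤ Real.log x := Real.log_nonneg hx
  rw [logWeight, logWeight, div_le_div_iff₀ (by positivity) (by positivity)]
  nlinarith

lemma logWeight_sub_succ_le {x : ℝ} (hx : 1 ≤ x) :
    logWeight x - logWeight (x + 1) ≤ (1 + Real.log x) / x ^ 2 := by
  have hlog : Real.log x ≤ Real.log (x + 1) := Real.log_le_log (by positivity) (by linarith)
  have hlogx : 0 ≤ Real.log x := Real.log_nonneg hx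
  rw [logWeight, logWeight, div_sub_div _ _ (by positivity) (by positivity),
    div_le_div_iff₀ (by positivity) (by positivity)]
  nlinarith [mul_le_mul_of_nonneg_left hlog (by positivity : (0:ℝ) ≤ x ^ 2 * x)]

lemma tendsto_logWeight_atTop : Tendsto logWeight atTop (𝓝 0) := by
  have hlog := Real.tendsto_pow_log_div_mul_add_atTop 1 0 1 one_ne_zero
  simp only [pow_one, one_mul, add_zero] at hlog
  simpa only [zero_add] using (tendsto_inv_atTop_zero.add hlog).congr fun x => by
    rw [logWeight, add_div, one_div]

lemma inv_nlogSeq_le_logWeight (k : ℕ) : (nlogSeq (k + 1))⁻¹ ≤ logWeight (k + 1) := by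
  rcases Nat.eq_zero_or_pos k with rfl | hk
  · simp [nlogSeq, logWeight]
  · have : ¬ k + 1 ≤ 1 := by omega
    simp only [nlogSeq, this, if_false, inv_div, logWeight, Nat.cast_add, Nat.cast_one]
    gcongr
    linarith

lemma logWeight_sub_succ_le_log {x : ℝ} (hx : 2 ≤ x) :
    logWeight x - logWeight (x + 1) ≤ 3 * Real.log x / x ^ 2 := by
  have hlog : 1 / 2 ≤ Real.log x := by
    have := Real.log_le_log (by norm_num) hx
    linarith [Real.log_two_gt_d9]
  calc logWeight x - logWeight (x + 1) ≤ (1 + Real.log x) / x ^ 2 :=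
        logWeight_sub_succ_le (by linarith)
    _ ≤ 3 * Real.log x / x ^ 2 := by gcongr; linarith

lemma tsum_logWeight_mul_ne_top {v : ℕ → ℝ≥0∞} (hv : Monotone v)
    (h : ∑' n : ℕ, v (n + 2) * ENNReal.ofReal (Real.log ((n : ℝ) + 2)) /
        ((n : ℝ≥0∞) + 2) ^ 2 ≠ ⊤) :
    ∑' j : ℕ, ENNReal.ofReal (logWeight (j + 1) - logWeight (((j + 1 : ℕ) : ℝ) + 1)) *
      v (j + 1) ≠ ⊤ := by
  have hv2 : v 2 ≠ ⊤ := by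
    intro htop
    apply ENNReal.ne_top_of_tsum_ne_top h 0
    have hlog : ENNReal.ofReal (Real.log ((0 : ℕ) + 2)) ≠ 0 :=
      (ENNReal.ofReal_pos.2 (Real.log_pos (by norm_num))).ne'
    rw [htop, ENNReal.top_mul hlog, ENNReal.top_div_of_ne_top (by simp)]
  rw [tsum_eq_zero_add' ENNReal.summable]
  refine ENNReal.add_ne_top.2 ⟨ENNReal.mul_ne_top ENNReal.ofReal_ne_top
    (ne_top_of_le_ne_top hv2 (hv (by norm_num))), ?_⟩
  refine ne_top_of_le_ne_top (ENNReal.mul_ne_top ENNReal.ofNat_ne_top h : (3 : ℝ≥0∞) * _ ≠ ⊤) ?_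
  rw [← ENNReal.tsum_mul_left]
  refine ENNReal.tsum_le_tsum fun n => ?_
  have hx : (2 : ℝ) ≤ n + 2 := by linarith [n.cast_nonneg (α := ℝ)]
  have hcast : ENNReal.ofReal ((n : ℝ) + 2) = (n : ℝ≥0∞) + 2 := by
    rw [ENNReal.ofReal_add (by positivity) (by norm_num)]; simp
  calc ENNReal.ofReal (logWeight (((n + 1 : ℕ) : ℝ) + 1) - logWeight (((n + 1 + 1 : ℕ) : ℝ) + 1)) *
        v (n + 1 + 1)
      ≤ ENNReal.ofReal (3 * Real.log ((n : ℝ) + 2) / ((n : ℝ) + 2) ^ 2) * v (n + 2) := by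
        gcongr
        convert logWeight_sub_succ_le_log hx using 3 <;> push_cast <;> ring
    _ = 3 * (v (n + 2) * ENNReal.ofReal (Real.log ((n : ℝ) + 2)) / ((n : ℝ≥0∞) + 2) ^ 2) := by
        rw [ENNReal.ofReal_div_of_pos (by positivity), ENNReal.ofReal_mul (by norm_num),
          ENNReal.ofReal_pow (by positivity), hcast, ENNReal.ofReal_ofNat]
        simp only [div_eq_mul_inv]
        ring

theorem lamSharpV1_nlogSeq_ne_top {f : ℝ → ℝ → ℝ}
    (h : ∑' n : ℕ, modSharpV1 f (n + 2) * ENNReal.ofReal (Real.log ((n : ℝ) + 2)) /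
        ((n : ℝ≥0∞) + 2) ^ 2 ≠ ⊤) :
    LamSharpV1 nlogSeq f ≠ ⊤ := by
  have hW : Antitone fun k : ℕ => logWeight (k + 1) := antitone_nat_of_succ_le fun k => by
    push_cast
    exact logWeight_succ_le (by linarith [k.cast_nonneg (α := ℝ)])
  have hW0 : Tendsto (fun k : ℕ => logWeight (k + 1)) atTop (𝓝 0) :=
    tendsto_logWeight_atTop.comp (tendsto_atTop_add_const_right _ 1 tendsto_natCast_atTop_atTop)
  exact ne_top_of_le_ne_top (tsum_logWeight_mul_ne_top (modSharpV1_mono f) h)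
    (lamSharpV1_le_tsum hW hW0 inv_nlogSeq_le_logWeight f)

theorem stmt8_general (f : ℝ → ℝ → ℝ)
    (h1 : ∑' n : ℕ, modSharpV1 f (n + 2) * ENNReal.ofReal (Real.log ((n : ℝ) + 2)) /
        ((n : ℝ≥0∞) + 2) ^ 2 ≠ ⊤)
    (h2 : ∑' n : ℕ, modSharpV2 f (n + 2) * ENNReal.ofReal (Real.log ((n : ℝ) + 2)) /
        ((n : ℝ≥0∞) + 2) ^ 2 ≠ ⊤) :
    LamSharpV1 nlogSeq f + LamSharpV2 nlogSeq f ≠ ⊤ :=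
  ENNReal.add_ne_top.2
    ⟨lamSharpV1_nlogSeq_ne_top h1, lamSharpV1_nlogSeq_ne_top (f := fun x y => f y x) h2⟩

/-- if `Σ v_s#(n,f)·log n / n² < ∞` for `s = 1,2`, then
`f ∈ {n/log n}#BV`. -/
theorem stmt8 (f : ℝ → ℝ → ℝ) (hper : Periodic2 f)
    (h1 : ∑' n : ℕ, modSharpV1 f (n + 2) * ENNReal.ofReal (Real.log ((n : ℝ) + 2)) /
        ((n : ℝ≥0∞) + 2) ^ 2 ≠ ⊤)
    (h2 : ∑' n : ℕ, modSharpV2 f (n + 2) * ENNReal.ofReal (Real.log ((n : ℝ) + 2)) /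
        ((n : ℝ≥0∞) + 2) ^ 2 ≠ ⊤) :
    LamSharpV1 nlogSeq f + LamSharpV2 nlogSeq f ≠ ⊤ :=
  stmt8_general f h1 h2
end
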